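/- arXiv:1207.6877 — 15 statements merged into one kernel-verified Lean document; each statement's English description precedes it below -/
import Mathlib

section
/- Suppose f is a real-valued function defined on an interval [a,b] (with a < b) and c is a point in [a, (a+b)/2] such that: (i) f(c−x) + f(c+x) = 2 f(c) whenever both c−x and c+x lie in [a,b]; and (ii) the restriction of f to [c,b] is convex. Then for every Borel probability measure μ on [a,b] with respect to which f is integrable and whose barycenter b_μ = ∫_a^b x dμ(x) lies in the interval [2c−a, b], one has f(b_μ) ≤ ∫_a^b f(x) dμ(x). -/
open MeasureTheory

private lemma integral_eq_of_ae_eq_const {μ : Measure ℝ} [IsProbabilityMeasure μ]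
    (f : ℝ → ℝ) {m : ℝ} (h : ∀ᵐ x ∂μ, x = m) : ∫ x, f x ∂μ = f m := by
  have : (fun x => f x) =ᵐ[μ] fun _ => f m := h.mono fun x hx => by rw [hx]
  rw [integral_congr_ae this, integral_const]
  simp

/-- Theorem 1: Jensen-type inequality for a function that is point-symmetric about
`(c, f c)` and convex on `[c, b]`, for probability measures whose barycenter lies
in `[2c - a, b]`. -/
theorem jensen_mixed_convex
    (a b c : ℝ) (hab : a < b) (hc : c ∈ Set.Icc a ((a + b) / 2))
    (f : ℝ → ℝ)
    (hsym : ∀ x : ℝ, c - x ∈ Set.Icc a b → c + x ∈ Set.Icc a b →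
      f (c - x) + f (c + x) = 2 * f c)
    (hconv : ConvexOn ℝ (Set.Icc c b) f)
    (μ : Measure ℝ) [IsProbabilityMeasure μ] (hμ : μ (Set.Icc a b) = 1)
    (hf_int : Integrable f μ) (hid_int : Integrable (fun x => x) μ)
    (hbary : (∫ x, x ∂μ) ∈ Set.Icc (2 * c - a) b) :
    f (∫ x, x ∂μ) ≤ ∫ x, f x ∂μ := by
  set m := ∫ x, x ∂μ with hm
  have hac : a ≤ c := hc.1
  have hcb2 : c ≤ (a + b) / 2 := hc.2
  have hcb : c ≤ b := by linarith
  have hcm : c ≤ m := by have := hbary.1; linarith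
  have hmb : m ≤ b := hbary.2
  -- a.e. membership in [a,b]
  have hae : ∀ᵐ x ∂μ, x ∈ Set.Icc a b := by
    rw [ae_iff]
    have hcompl : μ (Set.Icc a b)ᶜ = 0 := by
      rw [measure_compl measurableSet_Icc (measure_ne_top μ _), hμ, measure_univ]
      simp
    exact hcompl
  -- degenerate case m = b
  by_cases hmb' : m = b
  · have h0 : ∫ x, (b - x) ∂μ = 0 := by
      rw [integral_sub (integrable_const b) hid_int, integral_const]
      simp [← hm, hmb']
    have hnn : 0 ≤ᵐ[μ] fun x => b - x := hae.mono fun x hx => by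
      have := hx.2; simp; linarith
    have hz : (fun x => b - x) =ᵐ[μ] 0 :=
      (integral_eq_zero_iff_of_nonneg_ae hnn ((integrable_const b).sub hid_int)).1 h0
    have heq : ∀ᵐ x ∂μ, x = m := hz.mono fun x hx => by
      simp only [Pi.zero_apply] at hx; rw [hmb']; linarith
    rw [integral_eq_of_ae_eq_const f heq]
  by_cases hcm' : m = c
  · -- then c = a = m, and a.e. x = a
    have hca : c = a := by have := hbary.1; linarith
    have h0 : ∫ x, (x - a) ∂μ = 0 := by
      rw [integral_sub hid_int (integrable_const a), integral_const]
      have : m = a := by rw [hcm', hca]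
      simp [← hm, this]
    have hnn : 0 ≤ᵐ[μ] fun x => x - a := hae.mono fun x hx => by
      have := hx.1; simp; linarith
    have hz : (fun x => x - a) =ᵐ[μ] 0 :=
      (integral_eq_zero_iff_of_nonneg_ae hnn (hid_int.sub (integrable_const a))).1 h0
    have heq : ∀ᵐ x ∂μ, x = m := hz.mono fun x hx => by
      simp only [Pi.zero_apply] at hx; rw [hcm', hca]; linarith
    rw [integral_eq_of_ae_eq_const f heq]
  -- main case : c < m < b
  have hcmlt : c < m := lt_of_le_of_ne hcm (Ne.symm hcm')
  have hmblt : m < b := lt_of_le_of_ne hmb hmb'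
  have hmmem : m ∈ Set.Icc c b := ⟨hcm, hmb⟩
  have hcmem : c ∈ Set.Icc c b := ⟨le_refl c, hcb⟩
  have hbmem : b ∈ Set.Icc c b := ⟨hcb, le_refl b⟩
  -- supporting slope at m
  set S : Set ℝ := (fun y => (f m - f y) / (m - y)) '' Set.Ico c m with hS
  have hSne : S.Nonempty := ⟨_, ⟨c, ⟨le_refl c, hcmlt⟩, rfl⟩⟩
  have hSbdd : BddAbove S := by
    refine ⟨(f b - f m) / (b - m), ?_⟩
    rintro _ ⟨y, hy, rfl⟩
    exact hconv.slope_mono_adjacent ⟨hy.1, le_trans (le_of_lt hy.2) hmb⟩ hbmem hy.2 hmblt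
  set s : ℝ := sSup S with hs
  have hsupp : ∀ y ∈ Set.Icc c b, f m + s * (y - m) ≤ f y := by
    intro y hy
    rcases lt_trichotomy y m with h | h | h
    · have hle : (f m - f y) / (m - y) ≤ s :=
        le_csSup hSbdd ⟨y, ⟨hy.1, h⟩, rfl⟩
      rw [div_le_iff₀ (by linarith)] at hle
      nlinarith
    · simp [h]
    · have hge : s ≤ (f y - f m) / (y - m) := by
        apply csSup_le hSne
        rintro _ ⟨z, hz, rfl⟩
        exact hconv.slope_mono_adjacent ⟨hz.1, le_trans (le_of_lt hz.2) hmb⟩ hy hz.2 h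
      rw [le_div_iff₀ (by linarith)] at hge
      nlinarith
  -- the supporting line minorizes f on all of [a,b]
  have hL : ∀ x ∈ Set.Icc a b, f m + s * (x - m) ≤ f x := by
    intro x hx
    rcases le_or_gt c x with hcx | hcx
    · exact hsupp x ⟨hcx, hx.2⟩
    · -- reflect : x' = 2c - x ∈ [c, m]
      set x' : ℝ := 2 * c - x with hx'
      have hx'mem : x' ∈ Set.Icc c m := by
        constructor
        · simp only [hx']; linarith
        · have := hx.1; have := hbary.1; simp only [hx']; linarith
      have hsymx : f x + f x' = 2 * f c := by
        have h1 : c - (c - x) ∈ Set.Icc a b := by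
          simp only [sub_sub_cancel]; exact hx
        have h2 : c + (c - x) ∈ Set.Icc a b := by
          constructor
          · have := hx.1; linarith
          · have := hx.1; have := hbary.1; have := hbary.2; linarith
        have := hsym (c - x) h1 h2
        simpa [hx', sub_sub_cancel, show c + (c - x) = 2 * c - x by ring] using this
      -- convexity bound for f x'
      set θ : ℝ := (m - x') / (m - c) with hθ
      have hmc : (0:ℝ) < m - c := by linarith
      have hθ0 : 0 ≤ θ := div_nonneg (by linarith [hx'mem.2]) (le_of_lt hmc)
      have hθ1 : θ ≤ 1 := by
        rw [hθ, div_le_one hmc]; linarith [hx'mem.1]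
      have hcomb : θ • c + (1 - θ) • m = x' := by
        simp only [smul_eq_mul, hθ]; field_simp; ring
      have hfx' : f x' ≤ θ * f c + (1 - θ) * f m := by
        have := hconv.2 hcmem hmmem hθ0 (by linarith : (0:ℝ) ≤ 1 - θ)
          (by ring : θ + (1 - θ) = 1)
        rw [hcomb] at this
        simpa [smul_eq_mul] using this
      have hGc : f m + s * (c - m) ≤ f c := hsupp c hcmem
      have hxval : x = 2 * c - x' := by simp [hx']
      have hx'val : x' = θ * c + (1 - θ) * m := by
        rw [← hcomb]; simp [smul_eq_mul]
      have hxm : x - m = (2 - θ) * (c - m) := by rw [hxval, hx'val]; ring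
      have key : 0 ≤ (2 - θ) * (f c - f m - s * (c - m)) :=
        mul_nonneg (by linarith) (by linarith)
      calc f m + s * (x - m) = f m + s * ((2 - θ) * (c - m)) := by rw [hxm]
        _ ≤ 2 * f c - (θ * f c + (1 - θ) * f m) := by nlinarith [key]
        _ ≤ 2 * f c - f x' := by linarith
        _ = f x := by linarith
  -- integrate
  have hLint : Integrable (fun x => f m + s * (x - m)) μ := by
    have : Integrable (fun x => s * (x - m)) μ :=
      (hid_int.sub (integrable_const m)).const_mul s
    exact (integrable_const (f m)).add this
  have hmono : ∫ x, (f m + s * (x - m)) ∂μ ≤ ∫ x, f x ∂μ := by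
    apply integral_mono_ae hLint hf_int
    exact hae.mono fun x hx => hL x hx
  have hLval : ∫ x, (f m + s * (x - m)) ∂μ = f m := by
    have heq : (fun x => f m + s * (x - m)) = fun x => s * x + (f m - s * m) := by
      funext x; ring
    rw [heq, integral_add (hid_int.const_mul s) (integrable_const _),
      integral_const_mul, ← hm, integral_const]
    simp [measure_univ]
  linarith [hmono, hLval.symm.le]
end

section
/- Suppose f is a real-valued function defined on an interval [a,b] (with a < b) and c is a point in [a, (a+b)/2] such that: (i) f(c−x) + f(c+x) = 2 f(c) whenever both c−x and c+x lie in [a,b]; and (ii) the restriction of f to [c,b] is concave. Then for every Borel probability measure μ on [a,b] with respect to which f is integrable and whose barycenter b_μ = ∫_a^b x dμ(x) lies in the interval [2c−a, b], one has f(b_μ) ≥ ∫_a^b f(x) dμ(x). -/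
/-!
Let `m` be the barycenter. When `c < m < b`, concavity on `[c, b]` gives a supporting line
`f z ≤ f m + k (z - m)` on `[c, b]`. It persists on `[a, c)`: for `x < c` the reflected point
`y = 2c - x` lies in `(c, m]` because `2c - a ≤ m`, and by symmetry
`f m + k (x - m) - f x = (f m - f c - k (m - c)) + (f y - f c - k (y - c))`: the first bracket is
nonnegative by the supporting line at `c`, the second because the chord of `f` over `[c, y]` is
steeper than the one over `[c, m]`, which is steeper than `k`.
Integrating the supporting line against `μ` gives the inequality. When `m` is an endpoint of the
support (`m = b`, or `m = c`, which forces `c = a`), `μ` is the Dirac mass at `m`.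
-/

open MeasureTheory Set

section SupportingLine

variable {S : Set ℝ} {f : ℝ → ℝ}

lemma ConvexOn.add_rightDeriv_mul_sub_le {x y : ℝ} (hf : ConvexOn ℝ S f) (hx : x ∈ interior S)
    (hy : y ∈ S) : f x + derivWithin f (Ioi x) x * (y - x) ≤ f y := by
  rcases lt_trichotomy y x with hyx | rfl | hxy
  · have h := (hf.slope_le_leftDeriv_of_mem_interior hy hx hyx).trans
      (hf.leftDeriv_le_rightDeriv_of_mem_interior hx)
    rw [slope_def_field, div_le_iff₀ (sub_pos.2 hyx)] at h
    linarith
  · simp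
  · have h := hf.rightDeriv_le_slope_of_mem_interior hx hy hxy
    rw [slope_def_field, le_div_iff₀ (sub_pos.2 hxy)] at h
    linarith

lemma ConcaveOn.exists_le_add_mul_sub {x : ℝ} (hf : ConcaveOn ℝ S f) (hx : x ∈ interior S) :
    ∃ k, ∀ y ∈ S, f y ≤ f x + k * (y - x) := by
  refine ⟨-derivWithin (-f) (Ioi x) x, fun y hy => ?_⟩
  have h := hf.neg.add_rightDeriv_mul_sub_le hx hy
  simp only [Pi.neg_apply] at h
  linarith

lemma ConcaveOn.mul_sub_le_sub_of_le_add_mul_sub {c y m k : ℝ} (hf : ConcaveOn ℝ S f)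
    (hc : c ∈ S) (hm : m ∈ S) (hcy : c ≤ y) (hym : y ≤ m) (hk : f c ≤ f m + k * (c - m)) :
    k * (y - c) ≤ f y - f c := by
  rcases hcy.eq_or_lt with rfl | hcy
  · simp
  have hcm : c < m := hcy.trans_le hym
  have hy : y ∈ S := hf.1.ordConnected.out hc hm ⟨hcy.le, hym⟩
  have hkm : k ≤ slope f c m := by
    rw [slope_def_field, le_div_iff₀ (sub_pos.2 hcm)]
    linarith
  have hky := hkm.trans (hf.slope_anti hc ⟨hy, hcy.ne'⟩ ⟨hm, hcm.ne'⟩ hym)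
  rwa [slope_def_field, le_div_iff₀ (sub_pos.2 hcy)] at hky

end SupportingLine

lemma exists_le_add_mul_sub_of_symmetric_of_concaveOn {a b c m : ℝ} {f : ℝ → ℝ}
    (hsym : ∀ x : ℝ, c - x ∈ Icc a b → c + x ∈ Icc a b → f (c - x) + f (c + x) = 2 * f c)
    (hf : ConcaveOn ℝ (Icc c b) f) (hcm : c < m) (hmb : m < b) (ham : 2 * c - a ≤ m) :
    ∃ k, ∀ x ∈ Icc a b, f x ≤ f m + k * (x - m) := by
  have hcS : c ∈ Icc c b := ⟨le_rfl, hcm.le.trans hmb.le⟩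
  obtain ⟨k, hk⟩ := hf.exists_le_add_mul_sub (by rw [interior_Icc]; exact ⟨hcm, hmb⟩)
  refine ⟨k, fun x hx => ?_⟩
  rcases le_or_gt c x with hcx | hxc
  · exact hk x ⟨hcx, hx.2⟩
  have hfx : f x + f (2 * c - x) = 2 * f c := by
    have h := hsym (c - x) (by rwa [sub_sub_cancel]) (by constructor <;> linarith [hx.1])
    rwa [sub_sub_cancel, show c + (c - x) = 2 * c - x by ring] at h
  have hkc : f c ≤ f m + k * (c - m) := hk c hcS
  have hky : k * (2 * c - x - c) ≤ f (2 * c - x) - f c :=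
    hf.mul_sub_le_sub_of_le_add_mul_sub hcS ⟨hcm.le, hmb.le⟩ (by linarith)
      (by linarith [hx.1]) hkc
  linarith

section Barycenter

variable {Ω : Type*} [MeasurableSpace Ω] {μ : Measure Ω} [IsProbabilityMeasure μ]

lemma integral_le_of_ae_le_add_mul_sub {X g : Ω → ℝ} {α k : ℝ} (hX : Integrable X μ)
    (hg : Integrable g μ) (h : ∀ᵐ ω ∂μ, g ω ≤ α + k * (X ω - ∫ ω', X ω' ∂μ)) :
    ∫ ω, g ω ∂μ ≤ α := by
  have hXc : Integrable (fun ω => X ω - ∫ ω', X ω' ∂μ) μ := hX.sub (integrable_const _)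
  calc ∫ ω, g ω ∂μ ≤ ∫ ω, (α + k * (X ω - ∫ ω', X ω' ∂μ)) ∂μ :=
        integral_mono_ae hg ((integrable_const α).add (hXc.const_mul k)) h
    _ = α := by
        rw [integral_add (integrable_const α) (hXc.const_mul k), integral_const_mul,
          integral_sub hX (integrable_const _)]
        simp

lemma ae_eq_integral_of_ae_le_integral {g : Ω → ℝ} (hg : Integrable g μ)
    (h : ∀ᵐ ω ∂μ, g ω ≤ ∫ ω', g ω' ∂μ) : ∀ᵐ ω ∂μ, g ω = ∫ ω', g ω' ∂μ := by
  have hnn : 0 ≤ᵐ[μ] fun ω => (∫ ω', g ω' ∂μ) - g ω := h.mono fun ω hω => sub_nonneg.2 hω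
  have hzero : ∫ ω, ((∫ ω', g ω' ∂μ) - g ω) ∂μ = 0 := by
    rw [integral_sub (integrable_const _) hg]
    simp
  filter_upwards [(integral_eq_zero_iff_of_nonneg_ae hnn ((integrable_const _).sub hg)).1 hzero]
    with ω hω
  exact (sub_eq_zero.1 hω).symm

end Barycenter

theorem jensen_mixed_concave_general
    (a b c : ℝ) (hc : c ∈ Set.Icc a ((a + b) / 2))
    (f : ℝ → ℝ)
    (hsym : ∀ x : ℝ, c - x ∈ Set.Icc a b → c + x ∈ Set.Icc a b →
      f (c - x) + f (c + x) = 2 * f c)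
    (hconv : ConcaveOn ℝ (Set.Icc c b) f)
    (μ : Measure ℝ) [IsProbabilityMeasure μ] (hμ : μ (Set.Icc a b) = 1)
    (hf_int : Integrable f μ) (hid_int : Integrable (fun x => x) μ)
    (hbary : (∫ x, x ∂μ) ∈ Set.Icc (2 * c - a) b) :
    (∫ x, f x ∂μ) ≤ f (∫ x, x ∂μ) := by
  set m := ∫ x, x ∂μ with hm
  have hsupp : ∀ᵐ x ∂μ, x ∈ Icc a b :=
    (ae_mem_iff_measure_eq measurableSet_Icc.nullMeasurableSet).2 (by simp [hμ])
  have hcm : c ≤ m := by linarith [hc.1, hbary.1]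
  obtain ⟨k, hk⟩ : ∃ k, ∀ᵐ x ∂μ, f x ≤ f m + k * (x - m) := by
    rcases hbary.2.eq_or_lt with hmb | hmb
    · have hle : ∀ᵐ x ∂μ, x ≤ m := hsupp.mono fun x hx => hx.2.trans_eq hmb.symm
      refine ⟨0, ?_⟩
      filter_upwards [ae_eq_integral_of_ae_le_integral hid_int hle] with x hx
      simp [hx, hm]
    rcases hcm.eq_or_lt with hcm | hcm
    · have hle : ∀ᵐ x ∂μ, -x ≤ ∫ x, -x ∂μ := hsupp.mono fun x hx => by
        rw [integral_neg]
        linarith [hx.1, hc.1, hbary.1]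
      refine ⟨0, ?_⟩
      filter_upwards [ae_eq_integral_of_ae_le_integral (g := fun x => -x) hid_int.neg hle]
        with x hx
      rw [integral_neg, neg_inj] at hx
      simp [hx, hm]
    obtain ⟨k, hk⟩ := exists_le_add_mul_sub_of_symmetric_of_concaveOn hsym hconv hcm hmb hbary.1
    exact ⟨k, hsupp.mono hk⟩
  exact integral_le_of_ae_le_add_mul_sub hid_int hf_int hk

/-- Theorem 1: Jensen-type inequality for a function that is point-symmetric about
`(c, f c)` and concave on `[c, b]`, for probability measures whose barycenter lies
in `[2c - a, b]`. -/
theorem jensen_mixed_concave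
    (a b c : ℝ) (hab : a < b) (hc : c ∈ Set.Icc a ((a + b) / 2))
    (f : ℝ → ℝ)
    (hsym : ∀ x : ℝ, c - x ∈ Set.Icc a b → c + x ∈ Set.Icc a b →
      f (c - x) + f (c + x) = 2 * f c)
    (hconv : ConcaveOn ℝ (Set.Icc c b) f)
    (μ : Measure ℝ) [IsProbabilityMeasure μ] (hμ : μ (Set.Icc a b) = 1)
    (hf_int : Integrable f μ) (hid_int : Integrable (fun x => x) μ)
    (hbary : (∫ x, x ∂μ) ∈ Set.Icc (2 * c - a) b) :
    (∫ x, f x ∂μ) ≤ f (∫ x, x ∂μ) :=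
  jensen_mixed_concave_general a b c hc f hsym hconv μ hμ hf_int hid_int hbary
end

section
/- Suppose f is a real-valued function defined on an interval [a,b], c is a point in the open interval (a, (a+b)/2), f(c−x) + f(c+x) = 2 f(c) whenever both c−x and c+x lie in [a,b], and the restriction of f to [c,b] is convex. Let h be the affine function joining the points (a, f(a)) and (2c−a, f(2c−a)). Then the function g defined on [a,b] by g(x) = h(x) for x ∈ [a, 2c−a] and g(x) = f(x) for x ∈ [2c−a, b] is convex on [a,b]. -/
/-! With `m = 2c - a`, symmetry gives `f a + f m = 2 f c`, so the line `h` through `(a, f a)` and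
`(m, f m)` also passes through `(c, f c)`: it is the chord of `f` over `[c, m]`. As `f` is convex on
`[c, b]`, `f - h` vanishes at `c` and at `m` and is therefore nondecreasing on `[m, b]`. So `g - h`
is `0` on `[a, m]` and convex nondecreasing on `[m, b]`; gluing a convex antitone piece to a convex
monotone one yields a convex function, and adding back the affine `h` gives `g`. -/

open Set

section Gluing

variable {𝕜 E β : Type*} [Semiring 𝕜] [PartialOrder 𝕜]
  [AddCommMonoid E] [LinearOrder E] [IsOrderedAddMonoid E] [Module 𝕜 E] [PosSMulMono 𝕜 E]
  [AddCommMonoid β] [PartialOrder β] [IsOrderedAddMonoid β] [Module 𝕜 β] [PosSMulMono 𝕜 β]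
  {a e b : E} {φ : E → β}

theorem convexOn_Icc_of_antitoneOn_of_monotoneOn
    (hl : ConvexOn 𝕜 (Icc a e) φ) (hr : ConvexOn 𝕜 (Icc e b) φ)
    (h_anti : AntitoneOn φ (Icc a e)) (h_mono : MonotoneOn φ (Icc e b)) :
    ConvexOn 𝕜 (Icc a b) φ := by
  refine LinearOrder.convexOn_of_lt (convex_Icc a b) fun x hx y hy hxy p q hp hq hpq ↦ ?_
  rcases le_or_gt y e with hye | hey
  · exact hl.2 ⟨hx.1, hxy.le.trans hye⟩ ⟨hx.1.trans hxy.le, hye⟩ hp.le hq.le hpq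
  rcases le_or_gt e x with hex | hxe
  · exact hr.2 ⟨hex, hx.2⟩ ⟨hex.trans hxy.le, hy.2⟩ hp.le hq.le hpq
  have hxl : x ∈ Icc a e := ⟨hx.1, hxe.le⟩
  have hel : e ∈ Icc a e := ⟨hx.1.trans hxe.le, le_rfl⟩
  have her : e ∈ Icc e b := ⟨le_rfl, hey.le.trans hy.2⟩
  have hyr : y ∈ Icc e b := ⟨hey.le, hy.2⟩
  -- Move the endpoint on the far side of `p • x + q • y` to `e`; monotonicity pays for the move.
  rcases le_total (p • x + q • y) e with hze | hez
  · have hle : p • x + q • e ≤ p • x + q • y := by gcongr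
    have hmem : p • x + q • e ∈ Icc a e := hl.1 hxl hel hp.le hq.le hpq
    calc φ (p • x + q • y) ≤ φ (p • x + q • e) := h_anti hmem ⟨hmem.1.trans hle, hze⟩ hle
      _ ≤ p • φ x + q • φ e := hl.2 hxl hel hp.le hq.le hpq
      _ ≤ p • φ x + q • φ y := by gcongr; exact h_mono her hyr hey.le
  · have hle : p • x + q • y ≤ p • e + q • y := by gcongr
    have hmem : p • e + q • y ∈ Icc e b := hr.1 her hyr hp.le hq.le hpq
    calc φ (p • x + q • y) ≤ φ (p • e + q • y) := h_mono ⟨hez, hle.trans hmem.2⟩ hmem hle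
      _ ≤ p • φ e + q • φ y := hr.2 her hyr hp.le hq.le hpq
      _ ≤ p • φ x + q • φ y := by gcongr; exact h_anti hxl hel hxe.le

end Gluing

theorem ConvexOn.monotoneOn_of_le {𝕜 β : Type*} [Field 𝕜] [LinearOrder 𝕜] [IsStrictOrderedRing 𝕜]
    [AddCommMonoid β] [LinearOrder β] [IsOrderedCancelAddMonoid β] [Module 𝕜 β]
    [PosSMulStrictMono 𝕜 β] {s : Set 𝕜} {f : 𝕜 → β} {c m : 𝕜}
    (hf : ConvexOn 𝕜 s f) (hc : c ∈ s) (hcm : c < m) (hle : f c ≤ f m) :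
    MonotoneOn f (s ∩ Ici m) := by
  intro x hx y hy hxy
  have hcx : f c ≤ f x := hle.trans (hf.le_right_of_left_le'' hc hx.1 hcm hx.2 hle)
  exact hf.le_right_of_left_le'' hc hy.1 (hcm.trans_le hx.2) hxy hcx

/-- The key construction in the proof of Theorem 1: gluing the affine function `h`
joining `(a, f a)` and `(2c - a, f (2c - a))` with `f` on `[2c - a, b]` yields a
convex function on `[a, b]`, whenever `f` is point-symmetric about `(c, f c)` and
convex on `[c, b]`. -/
theorem glued_function_convex
    (a b c : ℝ) (hc : c ∈ Set.Ioo a ((a + b) / 2))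
    (f : ℝ → ℝ)
    (hsym : ∀ x : ℝ, c - x ∈ Set.Icc a b → c + x ∈ Set.Icc a b →
      f (c - x) + f (c + x) = 2 * f c)
    (hconv : ConvexOn ℝ (Set.Icc c b) f)
    (h : ℝ → ℝ)
    (hh : h = fun x => f a + (f (2 * c - a) - f a) / ((2 * c - a) - a) * (x - a))
    (g : ℝ → ℝ)
    (hg : g = fun x => if x ≤ 2 * c - a then h x else f x) :
    ConvexOn ℝ (Set.Icc a b) g := by
  obtain ⟨hac, hcb⟩ := hc
  set m := 2 * c - a with hm
  have hma : m - a = 2 * (c - a) := by rw [hm]; ring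
  have hfm : f a + f m = 2 * f c := by
    have := hsym (c - a) ⟨by linarith, by linarith⟩ ⟨by linarith, by linarith⟩
    rwa [sub_sub_cancel, show c + (c - a) = m by rw [hm]; ring] at this
  have hh_c : h c = f c := by
    rw [hh]; dsimp only; rw [hma]; field_simp [show c - a ≠ 0 by linarith]; linarith
  have hh_m : h m = f m := by
    rw [hh]; field_simp [show m - a ≠ 0 by linarith]; ring
  set σ := (f m - f a) / (m - a)
  have hh_affine : h = fun x => σ * x + (f a - σ * a) := by rw [hh]; ext x; ring
  have hh_convex : ConvexOn ℝ univ h :=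
    hh_affine ▸ ((LinearMap.mulLeft ℝ σ).convexOn convex_univ).add_const _
  have hh_concave : ConcaveOn ℝ univ h :=
    hh_affine ▸ ((LinearMap.mulLeft ℝ σ).concaveOn convex_univ).add_const _
  have hF : ConvexOn ℝ (Icc c b) (f - h) :=
    hconv.sub (hh_concave.subset (subset_univ _) (convex_Icc c b))
  have hF_mono : MonotoneOn (f - h) (Icc m b) :=
    (hF.monotoneOn_of_le (left_mem_Icc.2 (by linarith)) (by linarith) (by simp [hh_c, hh_m])).mono
      fun x hx ↦ ⟨⟨by linarith [hx.1], hx.2⟩, hx.1⟩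
  have h_left : EqOn (fun _ ↦ 0) (g - h) (Icc a m) := fun x hx ↦ by simp [hg, hx.2]
  have h_right : EqOn (f - h) (g - h) (Icc m b) := fun x hx ↦ by
    rcases hx.1.eq_or_lt with rfl | hmx
    · simp [hg, hh_m]
    · simp [hg, not_le.2 hmx]
  have h_diff : ConvexOn ℝ (Icc a b) (g - h) :=
    convexOn_Icc_of_antitoneOn_of_monotoneOn
      ((convexOn_const 0 (convex_Icc a m)).congr h_left)
      ((hF.subset (Icc_subset_Icc_left (by linarith)) (convex_Icc m b)).congr h_right)
      (antitoneOn_const.congr h_left) (hF_mono.congr h_right)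
  simpa using h_diff.add (hh_convex.subset (subset_univ _) (convex_Icc a b))
end

section
/- Suppose b > 0, a ∈ [−b/3, 0), and p : [−b,b] → [0,∞) is a nondecreasing integrable function. Then ∫_a^b (x + a) p(x) dx ≥ 0; equivalently, the weighted mean (∫_a^b x p(x) dx)/(∫_a^b p(x) dx) is at least −a whenever ∫_a^b p(x) dx > 0. -/
open MeasureTheory intervalIntegral

/-- The key estimate in the proof of Corollary 1: for `a ∈ [-b/3, 0)` and a
nonnegative nondecreasing weight `p` on `[-b, b]`, one has `∫_a^b (x + a) p(x) dx ≥ 0`;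
equivalently, the weighted mean of `x` is at least `-a` whenever `∫_a^b p > 0`. -/
theorem weighted_mean_bound
    (b : ℝ) (hb : 0 < b) (a : ℝ) (ha : a ∈ Set.Ico (-b / 3) 0)
    (p : ℝ → ℝ)
    (hp_nonneg : ∀ x ∈ Set.Icc (-b) b, 0 ≤ p x)
    (hp_mono : MonotoneOn p (Set.Icc (-b) b))
    (hint_p : IntervalIntegrable p volume a b)
    (hint_xp : IntervalIntegrable (fun x => x * p x) volume a b) :
    0 ≤ (∫ x in a..b, (x + a) * p x) ∧
      (0 < (∫ x in a..b, p x) →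
        -a ≤ (∫ x in a..b, x * p x) / (∫ x in a..b, p x)) := by
  obtain ⟨ha1, ha2⟩ := ha
  have hab : a ≤ b := ha2.le.trans hb.le
  have hmemneg : (-a) ∈ Set.Icc (-b) b := by constructor <;> nlinarith
  have hg : IntervalIntegrable (fun x => (x + a) * p x) volume a b := by
    have h := hint_xp.add (hint_p.const_mul a)
    have : (fun x => x * p x + a * p x) = fun x => (x + a) * p x := by
      funext x; ring
    rwa [this] at h
  have hcont : IntervalIntegrable (fun x => (x + a) * p (-a)) volume a b :=
    (((continuous_id.add continuous_const).mul continuous_const)).intervalIntegrable a b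
  have key : (∫ x in a..b, (x + a) * p (-a)) ≤ ∫ x in a..b, (x + a) * p x := by
    apply intervalIntegral.integral_mono_on hab hcont hg
    intro x hx
    have hx1 := hx.1
    have hx2 := hx.2
    have hxmem : x ∈ Set.Icc (-b) b := ⟨by nlinarith, hx2⟩
    rcases le_total x (-a) with h | h
    · have hpx : p x ≤ p (-a) := hp_mono hxmem hmemneg h
      nlinarith
    · have hpx : p (-a) ≤ p x := hp_mono hmemneg hxmem h
      nlinarith [hp_nonneg (-a) hmemneg]
  have hval : (∫ x in a..b, (x + a) * p (-a)) = ((b^2 - a^2)/2 + a*(b-a)) * p (-a) := by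
    rw [intervalIntegral.integral_mul_const]
    congr 1
    rw [intervalIntegral.integral_add intervalIntegrable_id intervalIntegrable_const,
      integral_id, intervalIntegral.integral_const, smul_eq_mul]
    ring
  have hnn : 0 ≤ (∫ x in a..b, (x + a) * p (-a)) := by
    rw [hval]
    have h0 := hp_nonneg (-a) hmemneg
    have : 0 ≤ (b - a) * (b + 3*a) := by nlinarith
    nlinarith
  have h1 : 0 ≤ (∫ x in a..b, (x + a) * p x) := hnn.trans key
  refine ⟨h1, fun hpos => ?_⟩
  rw [le_div_iff₀ hpos]
  have hsplit : (∫ x in a..b, (x + a) * p x)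
      = (∫ x in a..b, x * p x) + a * (∫ x in a..b, p x) := by
    have : (fun x => (x + a) * p x) = fun x => x * p x + a * p x := by
      funext x; ring
    rw [this, intervalIntegral.integral_add hint_xp (hint_p.const_mul a),
      intervalIntegral.integral_const_mul]
  nlinarith [h1, hsplit]
end

section
/- Suppose f is a real-valued function defined on an interval I containing the origin such that the restriction of f to I ∩ [0,∞) is convex and f(−x) = −f(x) whenever both x and −x belong to I. Then for every family of points a_1, …, a_n in I and every family of weights p_1, …, p_n ∈ [0,∞) with Σ_{k=1}^n p_k = 1 and Σ_{k=1}^n p_k a_k + min{a_1, …, a_n} ≥ 0, one has f(Σ_{k=1}^n p_k a_k) ≤ Σ_{k=1}^n p_k f(a_k). -/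
open Finset

/-! With `S = ∑ pₖ aₖ`, split every point as `aₖ = aₖ⁺ + aₖ⁻` (positive and negative part) and
put `T = ∑ pₖ aₖ⁺ ≥ S`; since `f 0 = 0`, `f aₖ = f aₖ⁺ + f aₖ⁻`. Ordinary Jensen on `I ∩ [0, ∞)`
gives `f T ≤ ∑ pₖ f aₖ⁺`. A convex function vanishing at `0` has chords through the origin of
increasing slope, so `f T ≥ (T / S) f S`, and by oddness, as `-S ≤ aₖ⁻ ≤ 0`, also
`f aₖ⁻ ≥ (aₖ⁻ / S) f S`. Summing, `∑ pₖ f aₖ ≥ (T + (S - T)) / S · f S = f S`. When `S = 0` the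
constraint forces all `aₖ ≥ 0` and ordinary Jensen applies. -/

theorem ConvexOn.mul_map_le_mul_map_of_map_zero {s : Set ℝ} {f : ℝ → ℝ} (hf : ConvexOn ℝ s f)
    (h0 : 0 ∈ s) (hf0 : f 0 = 0) {x y : ℝ} (hy : y ∈ s) (hx : 0 ≤ x) (hxy : x ≤ y) :
    y * f x ≤ x * f y := by
  rcases hx.eq_or_lt with rfl | hx
  · simp [hf0]
  rcases hxy.eq_or_lt with rfl | hxy
  · rfl
  simpa [hf0] using hf.secant_mono_aux1 h0 hy hx hxy

theorem map_max_zero_add_map_min_zero {f : ℝ → ℝ} (hf0 : f 0 = 0) (x : ℝ) :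
    f (max x 0) + f (min x 0) = f x := by
  rcases le_total 0 x with hx | hx <;> simp [hx, hf0]

theorem sum_mul_nonneg_of_neg_sum_le {ι : Type*} {t : Finset ι} {p a : ι → ℝ}
    (hp : ∀ k ∈ t, 0 ≤ p k) (hp1 : ∑ k ∈ t, p k = 1)
    (hneg : ∀ k ∈ t, -∑ j ∈ t, p j * a j ≤ a k) :
    0 ≤ ∑ k ∈ t, p k * a k := by
  set S := ∑ k ∈ t, p k * a k
  have : -S ≤ S := calc
    -S = ∑ k ∈ t, p k * -S := by rw [← sum_mul, hp1, one_mul]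
    _ ≤ S := sum_le_sum fun k hk => mul_le_mul_of_nonneg_left (hneg k hk) (hp k hk)
  linarith

section Odd

open Set

variable {I : Set ℝ} {f : ℝ → ℝ}

theorem map_zero_of_odd (h0 : 0 ∈ I) (hodd : ∀ x ∈ I, -x ∈ I → f (-x) = -f x) : f 0 = 0 := by
  have h := hodd 0 h0 (by simpa using h0)
  rw [neg_zero] at h
  linarith

theorem ConvexOn.mul_map_le_mul_map_of_odd (hI : Convex ℝ I) (h0 : 0 ∈ I)
    (hconv : ConvexOn ℝ (I ∩ Ici 0) f) (hodd : ∀ x ∈ I, -x ∈ I → f (-x) = -f x)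
    {x y : ℝ} (hx : x ∈ I) (hy : y ∈ I) (hyx : -y ≤ x) (hx0 : x ≤ 0) :
    x * f y ≤ y * f x := by
  have hnx : -x ∈ I := hI.ordConnected.out h0 hy ⟨by linarith, by linarith⟩
  have := hconv.mul_map_le_mul_map_of_map_zero ⟨h0, mem_Ici.2 le_rfl⟩ (map_zero_of_odd h0 hodd)
    ⟨hy, mem_Ici.2 (by linarith)⟩ (neg_nonneg.2 hx0) (by linarith)
  rw [hodd x hx hnx] at this
  linarith

variable {ι : Type*} {t : Finset ι} {p a : ι → ℝ}

theorem ConvexOn.map_sum_le_of_odd_of_pos (hI : Convex ℝ I) (h0 : 0 ∈ I)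
    (hconv : ConvexOn ℝ (I ∩ Ici 0) f) (hodd : ∀ x ∈ I, -x ∈ I → f (-x) = -f x)
    (hp : ∀ k ∈ t, 0 ≤ p k) (hp1 : ∑ k ∈ t, p k = 1) (ha : ∀ k ∈ t, a k ∈ I)
    (hneg : ∀ k ∈ t, -∑ j ∈ t, p j * a j ≤ a k) (hpos : 0 < ∑ k ∈ t, p k * a k) :
    f (∑ k ∈ t, p k * a k) ≤ ∑ k ∈ t, p k * f (a k) := by
  set S := ∑ k ∈ t, p k * a k
  set T := ∑ k ∈ t, p k * max (a k) 0
  have hf0 := map_zero_of_odd h0 hodd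
  have hmax_mem : ∀ k ∈ t, max (a k) 0 ∈ I ∩ Ici 0 := fun k hk =>
    ⟨max_rec' (· ∈ I) (ha k hk) h0, mem_Ici.2 (le_max_right _ _)⟩
  have hT : T ∈ I ∩ Ici 0 := by simpa using (hI.inter (convex_Ici 0)).sum_mem hp hp1 hmax_mem
  have hST : S ≤ T := sum_le_sum fun k hk => mul_le_mul_of_nonneg_left (le_max_left _ _) (hp k hk)
  have hTS : T + ∑ k ∈ t, p k * min (a k) 0 = S := by
    simp only [T, S, ← sum_add_distrib, ← mul_add, max_add_min, add_zero]
  have jensen_max : f T ≤ ∑ k ∈ t, p k * f (max (a k) 0) := by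
    simpa using hconv.map_sum_le hp hp1 hmax_mem
  have chord_max : T * f S ≤ S * f T :=
    hconv.mul_map_le_mul_map_of_map_zero ⟨h0, mem_Ici.2 le_rfl⟩ hf0 hT hpos.le hST
  have chord_min (k) (hk : k ∈ t) : min (a k) 0 * f S ≤ S * f (min (a k) 0) :=
    hconv.mul_map_le_mul_map_of_odd hI h0 hodd (min_rec' (· ∈ I) (ha k hk) h0)
      (by simpa using hI.sum_mem hp hp1 ha) (le_min (hneg k hk) (by linarith)) (min_le_right _ _)
  refine le_of_mul_le_mul_left ?_ hpos
  calc S * f S = T * f S + (∑ k ∈ t, p k * min (a k) 0) * f S := by rw [← hTS]; ring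
    _ ≤ S * f T + ∑ k ∈ t, p k * (min (a k) 0 * f S) := by
      simp only [← mul_assoc, ← sum_mul]
      linarith
    _ ≤ S * ∑ k ∈ t, p k * f (max (a k) 0) + ∑ k ∈ t, p k * (S * f (min (a k) 0)) :=
      add_le_add (mul_le_mul_of_nonneg_left jensen_max hpos.le)
        (sum_le_sum fun k hk => mul_le_mul_of_nonneg_left (chord_min k hk) (hp k hk))
    _ = S * ∑ k ∈ t, p k * f (a k) := by
      simp only [← map_max_zero_add_map_min_zero hf0 (a _), mul_add, sum_add_distrib, mul_sum,
        mul_left_comm (p _) S]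

theorem ConvexOn.map_sum_le_of_odd (hI : Convex ℝ I) (h0 : 0 ∈ I)
    (hconv : ConvexOn ℝ (I ∩ Ici 0) f) (hodd : ∀ x ∈ I, -x ∈ I → f (-x) = -f x)
    (hp : ∀ k ∈ t, 0 ≤ p k) (hp1 : ∑ k ∈ t, p k = 1) (ha : ∀ k ∈ t, a k ∈ I)
    (hneg : ∀ k ∈ t, -∑ j ∈ t, p j * a j ≤ a k) :
    f (∑ k ∈ t, p k * a k) ≤ ∑ k ∈ t, p k * f (a k) := by
  rcases (sum_mul_nonneg_of_neg_sum_le hp hp1 hneg).eq_or_lt with hzero | hpos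
  · have ha_nonneg (k) (hk : k ∈ t) : a k ∈ I ∩ Ici 0 :=
      ⟨ha k hk, by simpa [← hzero] using hneg k hk⟩
    simpa using hconv.map_sum_le hp hp1 ha_nonneg
  · exact hconv.map_sum_le_of_odd_of_pos hI h0 hodd hp hp1 ha hneg hpos

end Odd

/-- Corollary 2 (discrete version of Theorem 1): Jensen's inequality for an odd
function convex on `I ∩ [0, ∞)`, under the constraint
`Σ p_k a_k + min_k a_k ≥ 0`. -/
theorem jensen_discrete_odd
    (I : Set ℝ) (hI : Convex ℝ I) (h0 : (0 : ℝ) ∈ I)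
    (f : ℝ → ℝ)
    (hconv : ConvexOn ℝ (I ∩ Set.Ici 0) f)
    (hodd : ∀ x : ℝ, x ∈ I → -x ∈ I → f (-x) = -f x)
    (n : ℕ) (hn : 0 < n)
    (a : Fin n → ℝ) (ha : ∀ k, a k ∈ I)
    (p : Fin n → ℝ) (hp : ∀ k, 0 ≤ p k)
    (hp_sum : ∑ k, p k = 1)
    (hmin : 0 ≤ (∑ k, p k * a k) +
      Finset.univ.inf' (Finset.univ_nonempty_iff.mpr ⟨⟨0, hn⟩⟩) a) :
    f (∑ k, p k * a k) ≤ ∑ k, p k * f (a k) := by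
  refine hconv.map_sum_le_of_odd hI h0 hodd (fun k _ => hp k) hp_sum (fun k _ => ha k)
    fun k hk => ?_
  linarith [inf'_le a hk]
end

section
/- Suppose f is a real-valued function defined on an interval I containing the origin such that the restriction of f to I ∩ [0,∞) is convex and f(−x) = −f(x) whenever both x and −x belong to I. Then for every family of points a_1, …, a_n in I (n ≥ 1) such that Σ_{k=1}^n a_k + (n−2)·min{a_1, …, a_n} ≥ 0, one has f( (1/n) Σ_{k=1}^n a_k ) ≤ (1/n) Σ_{k=1}^n f(a_k). -/
/-!
A negative entry `x` can be merged into another entry `y ≥ -x`, replacing the pair by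
`(0, x + y)`. This keeps the sum, and it does not increase `∑ f` because
`f (x + y) + f (-x) ≤ f y` for an odd `f` that is convex on `[0, ∞)`, hence superadditive there.
If every entry is at least `m` and `∑ a + (n - 2) m ≥ 0`, the other entries of a negative entry
`x ≥ m` average at least `-x`, so a partner exists; merged entries are `≥ 0 > m`, so the
hypothesis survives. After all negative entries are merged, ordinary Jensen applies.
-/

open Finset

def OddOn (f : ℝ → ℝ) (I : Set ℝ) : Prop :=
  ∀ x ∈ I, -x ∈ I → f (-x) = -f x

theorem OddOn.map_zero {f : ℝ → ℝ} {I : Set ℝ} (hf : OddOn f I) (h0 : (0 : ℝ) ∈ I) :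
    f 0 = 0 := by
  have h := hf 0 h0 (by simpa using h0)
  rw [neg_zero] at h
  linarith

theorem ConvexOn.map_add_map_le_map_zero_add_map_add {s : Set ℝ} {f : ℝ → ℝ}
    (hf : ConvexOn ℝ s f) (h0 : (0 : ℝ) ∈ s) {u v : ℝ} (hu : 0 ≤ u) (hv : 0 ≤ v)
    (huv : u + v ∈ s) : f u + f v ≤ f 0 + f (u + v) := by
  rcases hu.eq_or_lt with rfl | hu
  · simp
  rcases hv.eq_or_lt with rfl | hv
  · simp [add_comm]
  have hfu := hf.secant_mono_aux1 h0 huv hu (by linarith : u < u + v)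
  have hfv := hf.secant_mono_aux1 h0 huv hv (by linarith : v < u + v)
  have : (u + v) * (f u + f v) ≤ (u + v) * (f 0 + f (u + v)) := by
    linear_combination hfu + hfv
  exact le_of_mul_le_mul_left this (by linarith)

theorem OddOn.map_add_le {I : Set ℝ} {f : ℝ → ℝ} (hI : I.OrdConnected) (h0 : (0 : ℝ) ∈ I)
    (hconv : ConvexOn ℝ (I ∩ Set.Ici 0) f) (hodd : OddOn f I) {x y : ℝ} (hx : x ∈ I) (hy : y ∈ I)
    (hx0 : x ≤ 0) (hxy : 0 ≤ x + y) : f (x + y) ≤ f x + f y := by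
  have hnegx : -x ∈ I := hI.out h0 hy ⟨by linarith, by linarith⟩
  have hsuper := hconv.map_add_map_le_map_zero_add_map_add ⟨h0, Set.self_mem_Ici⟩
    (neg_nonneg.2 hx0) hxy (by rw [neg_add_cancel_left]; exact ⟨hy, Set.mem_Ici.2 (by linarith)⟩)
  rw [neg_add_cancel_left, hodd x hx hnegx, hodd.map_zero h0] at hsuper
  linarith

section MergeInto

variable {ι M : Type*} [DecidableEq ι] {i j k : ι}

def mergeInto [AddCommMonoid M] (b : ι → M) (j i : ι) : ι → M :=
  Function.update (Function.update b j 0) i (b j + b i)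

section AddCommMonoid

variable [AddCommMonoid M] {b : ι → M}

theorem mergeInto_apply_self : mergeInto b j i i = b j + b i :=
  Function.update_self ..

theorem mergeInto_apply_left (hij : i ≠ j) : mergeInto b j i j = 0 := by
  rw [mergeInto, Function.update_of_ne hij.symm, Function.update_self]

theorem mergeInto_apply_of_ne (hki : k ≠ i) (hkj : k ≠ j) : mergeInto b j i k = b k := by
  rw [mergeInto, Function.update_of_ne hki, Function.update_of_ne hkj]

theorem forall_mergeInto {P : M → Prop} (hb : ∀ k, P (b k)) (h0 : P 0) (hji : P (b j + b i)) :
    ∀ k, P (mergeInto b j i k) := by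
  intro k
  simp only [mergeInto, Function.update_apply]
  split_ifs <;> first | exact hb k | assumption

theorem sum_comp_mergeInto {N : Type*} [Fintype ι] [AddCommMonoid N] (g : M → N) (hij : i ≠ j) :
    ∑ k, g (mergeInto b j i k) + (g (b j) + g (b i)) = ∑ k, g (b k) + (g 0 + g (b j + b i)) := by
  have hrest : ∀ k ∈ univ \ {i, j}, g (mergeInto b j i k) = g (b k) := by
    intro k hk
    rw [mem_sdiff, mem_insert, mem_singleton, not_or] at hk
    rw [mergeInto_apply_of_ne hk.2.1 hk.2.2]
  rw [← sum_sdiff (subset_univ {i, j}), ← sum_sdiff (subset_univ {i, j}) (f := fun k => g (b k)),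
    sum_pair hij, sum_pair hij, sum_congr rfl hrest, mergeInto_apply_self,
    mergeInto_apply_left hij]
  abel

theorem filter_mergeInto_neg_ssubset [Fintype ι] [LinearOrder M] (hij : i ≠ j) (hj : b j < 0)
    (hji : 0 ≤ b j + b i) :
    ({k | mergeInto b j i k < 0} : Finset ι) ⊂ ({k | b k < 0} : Finset ι) := by
  rw [ssubset_iff_of_subset]
  · refine ⟨j, by simpa using hj, fun h => ?_⟩
    rw [mem_filter, mergeInto_apply_left hij] at h
    exact lt_irrefl 0 h.2
  · intro k hk
    simp only [mem_filter, mem_univ, true_and, mergeInto, Function.update_apply] at hk ⊢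
    split_ifs at hk
    · exact absurd hk hji.not_gt
    · exact absurd hk (lt_irrefl 0)
    · exact hk

end AddCommMonoid

theorem sum_mergeInto [Fintype ι] [AddCancelCommMonoid M] {b : ι → M} (hij : i ≠ j) :
    ∑ k, mergeInto b j i k = ∑ k, b k :=
  add_right_cancel (b := b j + b i) (by simpa using sum_comp_mergeInto (b := b) id hij)

end MergeInto

theorem exists_ne_neg_le_of_nonneg_sum_add {ι : Type*} [Fintype ι] {b : ι → ℝ} {j : ι}
    (hn : 2 ≤ Fintype.card ι) (h : 0 ≤ ∑ k, b k + (Fintype.card ι - 2) * b j) :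
    ∃ i ≠ j, -b j ≤ b i := by
  classical
  have hcard : #(univ.erase j) = Fintype.card ι - 1 := by
    rw [card_erase_of_mem (mem_univ j), card_univ]
  have hne : (univ.erase j).Nonempty := by
    rw [← card_pos, hcard]; omega
  -- the entries other than `b j` sum to `∑ b - b j ≥ (card ι - 1) * -b j`
  have hsum : ∑ _k ∈ univ.erase j, -b j ≤ ∑ k ∈ univ.erase j, b k := by
    rw [sum_const, hcard, nsmul_eq_mul, Nat.cast_sub (by omega)]
    rw [← add_sum_erase univ b (mem_univ j)] at h
    push_cast
    linarith
  obtain ⟨i, hi, hle⟩ := exists_le_of_sum_le hne hsum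
  exact ⟨i, ne_of_mem_erase hi, hle⟩

theorem ConvexOn.map_one_div_card_mul_sum_le {s : Set ℝ} {f : ℝ → ℝ} (hf : ConvexOn ℝ s f)
    {ι : Type*} [Fintype ι] [Nonempty ι] {c : ι → ℝ} (hc : ∀ k, c k ∈ s) :
    f (1 / Fintype.card ι * ∑ k, c k) ≤ 1 / Fintype.card ι * ∑ k, f (c k) := by
  have hw : ∑ _k : ι, 1 / (Fintype.card ι : ℝ) = 1 := by simp
  simpa [← mul_sum] using hf.map_sum_le (t := univ) (w := fun _ => 1 / (Fintype.card ι : ℝ))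
    (p := c) (fun _ _ => by positivity) hw (fun k _ => hc k)

theorem OddOn.exists_nonneg_sum_eq_sum_map_le {I : Set ℝ} {f : ℝ → ℝ} (hI : I.OrdConnected)
    (h0 : (0 : ℝ) ∈ I) (hconv : ConvexOn ℝ (I ∩ Set.Ici 0) f) (hodd : OddOn f I)
    {ι : Type*} [Fintype ι] [DecidableEq ι] (hn : 2 ≤ Fintype.card ι) {m : ℝ} {b : ι → ℝ}
    (hbI : ∀ k, b k ∈ I) (hbm : ∀ k, m ≤ b k) (hS : 0 ≤ ∑ k, b k + (Fintype.card ι - 2) * m) :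
    ∃ c : ι → ℝ, (∀ k, c k ∈ I ∩ Set.Ici 0) ∧ ∑ k, c k = ∑ k, b k ∧
      ∑ k, f (c k) ≤ ∑ k, f (b k) := by
  induction hneg : ({k | b k < 0} : Finset ι) using Finset.strongInduction generalizing b with
  | H s ih =>
  subst hneg
  by_cases hs : ∃ j, b j < 0
  · obtain ⟨j, hj⟩ := hs
    have hn2 : (0 : ℝ) ≤ Fintype.card ι - 2 := by
      rw [sub_nonneg]; exact_mod_cast hn
    obtain ⟨i, hij, hi⟩ := exists_ne_neg_le_of_nonneg_sum_add hn
      (hS.trans (by gcongr; exact hbm j))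
    have hji : 0 ≤ b j + b i := by linarith
    obtain ⟨c, hcI, hcS, hcf⟩ := ih _ (filter_mergeInto_neg_ssubset hij hj hji)
      (forall_mergeInto hbI h0 (hI.out h0 (hbI i) ⟨hji, by linarith⟩))
      (forall_mergeInto hbm (by linarith [hbm j]) (by linarith [hbm j]))
      (by rwa [sum_mergeInto hij]) rfl
    refine ⟨c, hcI, hcS.trans (sum_mergeInto hij), hcf.trans ?_⟩
    have hsum := sum_comp_mergeInto f (b := b) hij
    have hpair := hodd.map_add_le hI h0 hconv (hbI j) (hbI i) hj.le hji
    rw [hodd.map_zero h0] at hsum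
    linarith
  · push Not at hs
    exact ⟨b, fun k => ⟨hbI k, hs k⟩, rfl, le_rfl⟩

/-- Corollary 3: for an odd function convex on `I ∩ [0, ∞)`, the equal-weights
Jensen inequality holds under the weaker constraint
`Σ a_k + (n - 2) · min_k a_k ≥ 0`. -/
theorem jensen_discrete_odd_equal_weights
    (I : Set ℝ) (hI : Convex ℝ I) (h0 : (0 : ℝ) ∈ I)
    (f : ℝ → ℝ)
    (hconv : ConvexOn ℝ (I ∩ Set.Ici 0) f)
    (hodd : ∀ x : ℝ, x ∈ I → -x ∈ I → f (-x) = -f x)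
    (n : ℕ) (hn : 1 ≤ n)
    (a : Fin n → ℝ) (ha : ∀ k, a k ∈ I)
    (hmin : 0 ≤ (∑ k, a k) +
      ((n : ℝ) - 2) * Finset.univ.inf' (Finset.univ_nonempty_iff.mpr ⟨⟨0, hn⟩⟩) a) :
    f ((1 / (n : ℝ)) * ∑ k, a k) ≤ (1 / (n : ℝ)) * ∑ k, f (a k) := by
  obtain rfl | hn2 := hn.eq_or_lt
  · simp
  have : Nonempty (Fin n) := ⟨⟨0, hn⟩⟩
  obtain ⟨c, hcI, hcS, hcf⟩ := OddOn.exists_nonneg_sum_eq_sum_map_le hI.ordConnected h0 hconv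
    hodd (by simpa using hn2.nat_succ_le) ha (fun k => inf'_le a (mem_univ k)) (by simpa using hmin)
  calc f (1 / n * ∑ k, a k) = f (1 / Fintype.card (Fin n) * ∑ k, c k) := by
        rw [hcS, Fintype.card_fin]
    _ ≤ 1 / Fintype.card (Fin n) * ∑ k, f (c k) := hconv.map_one_div_card_mul_sum_le hcI
    _ ≤ 1 / n * ∑ k, f (a k) := by
        rw [Fintype.card_fin]; gcongr
end

section
/- For every x, y, z ∈ (−π/6, π/2) satisfying x + y + z + min{x, y, z} ≥ 0, one has tan((x + y + z)/3) ≤ (tan x + tan y + tan z)/3. -/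
/-!
The only property of `tan` that is used is that its derivative `f' = 1 / cos ^ 2` satisfies
`f' a ≤ f' b` whenever `|a| ≤ b < π / 2`. For such `f` and `|x| ≤ v`, moving `t` from the mean
`(x + k v) / (k + 1)` up to `v` in `f (x + k v - k t) + k f t` (derivative
`k (f' t - f' (x + k v - k t)) ≥ 0`) gives `(k + 1) f ((x + k v) / (k + 1)) ≤ f x + k f v`.
If `x` is the smallest variable and `v = (y + z) / 2`, the case `k = 1` gives
`2 f v ≤ f y + f z` and the case `k = 2` gives `3 f ((x + y + z) / 3) ≤ f x + 2 f v`; here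
`x ≤ v` by minimality and `-v ≤ x` is the hypothesis `0 ≤ 2 x + y + z`.
-/

open Real Set

lemma le_of_hasDerivAt_nonneg {g g' : ℝ → ℝ} {a b : ℝ} (hab : a ≤ b)
    (hg : ∀ t ∈ Icc a b, HasDerivAt g (g' t) t) (hg' : ∀ t ∈ Ioo a b, 0 ≤ g' t) : g a ≤ g b := by
  refine monotoneOn_of_hasDerivWithinAt_nonneg (f' := g') (convex_Icc a b)
    (fun t ht => (hg t ht).continuousAt.continuousWithinAt) (fun t ht => ?_) (fun t ht => ?_)
    (left_mem_Icc.2 hab) (right_mem_Icc.2 hab) hab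
  · rw [interior_Icc] at ht ⊢
    exact (hg t (Ioo_subset_Icc_self ht)).hasDerivWithinAt
  · rw [interior_Icc] at ht
    exact hg' t ht

section

variable {f f' : ℝ → ℝ} {c : ℝ}

lemma add_one_mul_le_add_mul_of_abs_le
    (hf : ∀ t ∈ Ioo (-c) c, HasDerivAt f (f' t) t)
    (hf' : ∀ a b, |a| ≤ b → b < c → f' a ≤ f' b)
    {k x v : ℝ} (hk : 1 ≤ k) (hxv : |x| ≤ v) (hv : v < c) :
    (k + 1) * f ((x + k * v) / (k + 1)) ≤ f x + k * f v := by
  obtain ⟨hvx, hxv⟩ := abs_le.1 hxv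
  set s := (x + k * v) / (k + 1) with hs_def
  have hs : (k + 1) * s = x + k * v := by rw [hs_def]; field_simp
  have hsv : s ≤ v := by nlinarith
  have habs : ∀ t ∈ Icc s v, |x + k * v - k * t| ≤ t := fun t ⟨hst, htv⟩ =>
    abs_le.2 ⟨by nlinarith [mul_nonneg (sub_nonneg.2 hk) (sub_nonneg.2 htv)], by nlinarith⟩
  have hderiv : ∀ t ∈ Icc s v, HasDerivAt (fun t => f (x + k * v - k * t) + k * f t)
      (f' (x + k * v - k * t) * (-k) + k * f' t) t := by
    intro t ht
    have hlin : HasDerivAt (fun t => x + k * v - k * t) (-k) t := by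
      simpa using ((hasDerivAt_id t).const_mul k).const_sub (x + k * v)
    have htc : t < c := ht.2.trans_lt hv
    have ht0 : 0 ≤ t := (abs_nonneg _).trans (habs t ht)
    exact ((hf _ (abs_lt.1 ((habs t ht).trans_lt htc))).comp t hlin).add
      ((hf t ⟨by linarith, htc⟩).const_mul k)
  have hmono := le_of_hasDerivAt_nonneg hsv hderiv fun t ht => by
    have := hf' _ _ (habs t (Ioo_subset_Icc_self ht)) (ht.2.trans hv)
    nlinarith
  rw [show x + k * v - k * s = s by linarith, add_sub_cancel_right] at hmono
  linarith [add_one_mul k (f s)]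

lemma three_mul_le_add_add_of_le_of_le
    (hf : ∀ t ∈ Ioo (-c) c, HasDerivAt f (f' t) t)
    (hf' : ∀ a b, |a| ≤ b → b < c → f' a ≤ f' b)
    {x y z : ℝ} (hy : y < c) (hz : z < c) (hxy : x ≤ y) (hxz : x ≤ z) (h : 0 ≤ 2 * x + y + z) :
    3 * f ((x + y + z) / 3) ≤ f x + f y + f z := by
  have hpair : ∀ {a b}, |a| ≤ b → b < c → 2 * f ((a + b) / 2) ≤ f a + f b := fun hab hb => by
    simpa [one_add_one_eq_two] using
      add_one_mul_le_add_mul_of_abs_le hf hf' le_rfl hab hb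
  set v := (y + z) / 2 with hv
  have hyz : 2 * f v ≤ f y + f z := by
    rcases le_total y z with hyz | hzy
    · exact hpair (abs_le.2 ⟨by linarith, hyz⟩) hz
    · simpa only [v, add_comm y, add_comm (f y)] using hpair (abs_le.2 ⟨by linarith, hzy⟩) hy
  have hxv : 3 * f ((x + 2 * v) / 3) ≤ f x + 2 * f v := by
    simpa [show (2 : ℝ) + 1 = 3 by norm_num] using
      add_one_mul_le_add_mul_of_abs_le hf hf' one_le_two
        (abs_le.2 ⟨by linarith, by linarith⟩) (show v < c by linarith)
  rw [show x + 2 * v = x + y + z by ring] at hxv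
  linarith

lemma three_mul_le_add_add
    (hf : ∀ t ∈ Ioo (-c) c, HasDerivAt f (f' t) t)
    (hf' : ∀ a b, |a| ≤ b → b < c → f' a ≤ f' b)
    {x y z : ℝ} (hx : x < c) (hy : y < c) (hz : z < c) (h : 0 ≤ x + y + z + min x (min y z)) :
    3 * f ((x + y + z) / 3) ≤ f x + f y + f z := by
  have hmx := min_le_left x (min y z)
  have hmy := (min_le_right x (min y z)).trans (min_le_left y z)
  have hmz := (min_le_right x (min y z)).trans (min_le_right y z)
  obtain hm | hm | hm : min x (min y z) = x ∨ min x (min y z) = y ∨ min x (min y z) = z := by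
    rcases min_choice x (min y z) with hm | hm
    · exact .inl hm
    · rw [hm]; exact .inr (min_choice y z)
  all_goals rw [hm] at h hmx hmy hmz
  · exact three_mul_le_add_add_of_le_of_le hf hf' hy hz hmy hmz (by linarith)
  · have := three_mul_le_add_add_of_le_of_le hf hf' hx hz hmx hmz (by linarith)
    rwa [add_comm y x, add_comm (f y) (f x)] at this
  · have := three_mul_le_add_add_of_le_of_le hf hf' hx hy hmx hmy (by linarith)
    rwa [add_rotate z x y, add_rotate (f z)] at this

end

lemma one_div_cos_sq_le_of_abs_le {a b : ℝ} (hab : |a| ≤ b) (hb : b < π / 2) :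
    1 / cos a ^ 2 ≤ 1 / cos b ^ 2 := by
  have hcb : 0 < cos b := cos_pos_of_mem_Ioo ⟨by linarith [abs_nonneg a, pi_pos], hb⟩
  have hba : cos b ≤ cos a := by
    rw [← cos_abs a]
    exact cos_le_cos_of_nonneg_of_le_pi (abs_nonneg a) (by linarith [pi_pos]) hab
  gcongr

/-- The tangent example illustrating Corollary 3: for `x, y, z ∈ (-π/6, π/2)` with
`x + y + z + min{x, y, z} ≥ 0`, one has
`tan((x + y + z)/3) ≤ (tan x + tan y + tan z)/3`. -/
theorem tan_jensen_three
    (x y z : ℝ)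
    (hx : x ∈ Set.Ioo (-(π / 6)) (π / 2))
    (hy : y ∈ Set.Ioo (-(π / 6)) (π / 2))
    (hz : z ∈ Set.Ioo (-(π / 6)) (π / 2))
    (hmin : 0 ≤ x + y + z + min x (min y z)) :
    tan ((x + y + z) / 3) ≤ (tan x + tan y + tan z) / 3 := by
  have := three_mul_le_add_add (fun t ht => hasDerivAt_tan (cos_pos_of_mem_Ioo ht).ne')
    (fun _ _ => one_div_cos_sq_le_of_abs_le) hx.2 hy.2 hz.2 hmin
  linarith
end

section
/- Let μ be a real (signed) Borel measure on an interval [a,b] with μ([a,b]) > 0. Then μ is a Steffensen-Popoviciu measure (i.e., ∫_a^b f dμ ≥ 0 for every continuous convex function f : [a,b] → [0,∞)) if and only if ∫_a^t (t − x) dμ(x) ≥ 0 and ∫_t^b (x − t) dμ(x) ≥ 0 for every t ∈ [a,b]. -/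
/-!
A continuous convex function `f ≥ 0` on `[a, b]` is uniformly approximated by its piecewise linear
interpolants on finer and finer uniform grids. Split every increment of an interpolant into its
positive and negative parts: by convexity the positive parts increase and the negative parts
decrease along the grid, so summation by parts writes the interpolant, on `[a, b]`, as the value of
`f` at its smallest node plus a nonnegative combination of the hinges `(x - t)⁺` and `(t - x)⁺`.
The endpoint conditions say precisely that `μ` integrates these hinges to nonnegative numbers, and
`μ([a, b]) > 0` handles the constant; conversely the hinges are themselves continuous, convex and
nonnegative.
-/

open MeasureTheory Set

lemma posPart_sub_sub_posPart_sub {α : Type*} [Lattice α] [AddGroup α] [AddLeftMono α] (a b : α) :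
    (a - b)⁺ - (b - a)⁺ = a - b := by
  rw [← neg_sub a b, posPart_neg, posPart_sub_negPart]

/-- By summation by parts the element is `∑ i ∈ Ico 1 n, (s i - s (i - 1)) • v i`. -/
lemma PointedCone.sum_range_by_parts_mem {R E : Type*} [Ring R] [PartialOrder R] [IsOrderedRing R]
    [AddCommGroup E] [Module R E] (C : PointedCone R E) {s : ℕ → R} {v : ℕ → E} {n : ℕ}
    (hs : ∀ i, i + 1 < n → s i ≤ s (i + 1)) (hv : ∀ i ≤ n, v i ∈ C) :
    ∑ i ∈ Finset.range n, s i • (v i - v (i + 1)) + s (n - 1) • v n - s 0 • v 0 ∈ C := by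
  induction n with
  | zero => simp
  | succ n ih =>
    have hsn : s (n - 1) ≤ s n := by
      rcases n with _ | n
      · exact le_rfl
      · exact hs n (by omega)
    have hsucc : ∑ i ∈ Finset.range (n + 1), s i • (v i - v (i + 1)) + s (n + 1 - 1) • v (n + 1)
        - s 0 • v 0 = (∑ i ∈ Finset.range n, s i • (v i - v (i + 1)) + s (n - 1) • v n - s 0 • v 0)
          + (s n - s (n - 1)) • v n := by
      rw [Finset.sum_range_succ, Nat.add_sub_cancel, sub_smul, smul_sub]
      abel
    rw [hsucc]
    exact C.add_mem (ih (fun i hi => hs i (by omega)) fun i hi => hv i (by omega))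
      (C.smul_mem (sub_nonneg.2 hsn) (hv n (by omega)))

lemma LinearMap.nonneg_of_mem_hull {E : Type*} [AddCommGroup E] [Module ℝ E] (Λ : E →ₗ[ℝ] ℝ)
    {s : Set E} (hs : ∀ v ∈ s, 0 ≤ Λ v) {v : E} (hv : v ∈ PointedCone.hull ℝ s) : 0 ≤ Λ v := by
  have : PointedCone.hull ℝ s ≤ (PointedCone.positive ℝ ℝ).comap Λ :=
    Submodule.span_le.2 fun w hw =>
      PointedCone.mem_comap.2 ((PointedCone.mem_positive ℝ ℝ).2 (hs w hw))
  exact this hv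

lemma PointedCone.sum_smul_sub_succ_add_mem {R E : Type*} [Ring R] [PartialOrder R]
    [IsOrderedRing R] [AddCommGroup E] [Module R E] (C : PointedCone R E) {s : ℕ → R}
    {v : ℕ → E} {n : ℕ} (hs : ∀ i, i + 1 < n → s i ≤ s (i + 1)) (hs₀ : 0 ≤ s 0)
    (hv : ∀ i ≤ n, v i ∈ C) :
    ∑ i ∈ Finset.range n, s i • (v i - v (i + 1)) + s (n - 1) • v n ∈ C := by
  convert C.add_mem (C.sum_range_by_parts_mem hs hv) (C.smul_mem hs₀ (hv 0 n.zero_le)) using 1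
  abel

lemma PointedCone.sum_smul_succ_sub_add_mem {R E : Type*} [Ring R] [PartialOrder R]
    [IsOrderedRing R] [AddCommGroup E] [Module R E] (C : PointedCone R E) {s : ℕ → R}
    {v : ℕ → E} {n : ℕ} (hs : ∀ i, i + 1 < n → s (i + 1) ≤ s i) (hsn : 0 ≤ s (n - 1))
    (hv : ∀ i ≤ n, v i ∈ C) :
    ∑ i ∈ Finset.range n, s i • (v (i + 1) - v i) + s 0 • v 0 ∈ C := by
  convert C.add_mem (C.sum_range_by_parts_mem (s := fun i => -s i)
    (fun i hi => neg_le_neg (hs i hi)) hv) (C.smul_mem hsn (hv n le_rfl)) using 1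
  simp only [neg_smul, smul_sub, Finset.sum_sub_distrib, Finset.sum_neg_distrib]
  abel

theorem ConvexOn.sub_le_sub_of_le {s : Set ℝ} {f : ℝ → ℝ} (hf : ConvexOn ℝ s f) {p q h : ℝ}
    (hp : p ∈ s) (hq : q + h ∈ s) (hpq : p ≤ q) (hh : 0 < h) :
    f (p + h) - f p ≤ f (q + h) - f q := by
  have hmem : ∀ x, p ≤ x → x ≤ q + h → x ∈ s := fun x h₁ h₂ =>
    hf.1.ordConnected.out hp hq ⟨h₁, h₂⟩
  have h₁ := hf.secant_mono hp (hmem _ (by linarith) (by linarith)) hq (by linarith) (by linarith)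
    (by linarith : p + h ≤ q + h)
  have h₂ := hf.secant_mono hq hp (hmem q hpq (by linarith)) (by linarith) (by linarith) hpq
  have e₁ : (f p - f (q + h)) / (p - (q + h)) = (f (q + h) - f p) / (q + h - p) := by
    rw [← neg_div_neg_eq, neg_sub, neg_sub]
  have e₂ : (f q - f (q + h)) / (q - (q + h)) = (f (q + h) - f q) / h := by
    rw [← neg_div_neg_eq, neg_sub, neg_sub, add_sub_cancel_left]
  rw [add_sub_cancel_left] at h₁
  rw [e₁, e₂] at h₂
  exact (div_le_div_iff_of_pos_right hh).1 (h₁.trans h₂)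

lemma sum_negPart_sub_eq_sub_of_forall_le {y : ℕ → ℝ} {N j : ℕ}
    (hy : ∀ i k, i ≤ k → k < N → y (i + 1) - y i ≤ y (k + 1) - y k) (hj : j ≤ N)
    (hmin : ∀ k ≤ N, y j ≤ y k) :
    ∑ i ∈ Finset.range N, (y (i + 1) - y i)⁻ = y 0 - y j := by
  rw [← Finset.sum_range_add_sum_Ico _ hj, Finset.sum_eq_zero (s := Finset.Ico j N), add_zero,
    ← neg_sub, ← Finset.sum_range_sub, ← Finset.sum_neg_distrib]
  · refine Finset.sum_congr rfl fun i hi => negPart_of_nonpos ?_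
    rw [Finset.mem_range] at hi
    have := hy i (j - 1) (by omega) (by omega)
    have := hmin (j - 1) (by omega)
    rw [Nat.sub_add_cancel (by omega)] at *
    linarith
  · intro i hi
    rw [Finset.mem_Ico] at hi
    refine negPart_eq_zero.2 ?_
    have := hy j i hi.1 hi.2
    have := hmin (j + 1) (by omega)
    linarith

lemma exists_lt_mem_Icc_succ {t : ℕ → ℝ} {N : ℕ} (hN : 0 < N) {x : ℝ}
    (hx : x ∈ Icc (t 0) (t N)) : ∃ k < N, x ∈ Icc (t k) (t (k + 1)) := by
  classical
  have hex : ∃ k, x ≤ t (k + 1) := ⟨N - 1, by rw [Nat.sub_add_cancel hN]; exact hx.2⟩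
  refine ⟨Nat.find hex, ?_, ?_, Nat.find_spec hex⟩
  · by_contra h
    exact Nat.find_min hex (show N - 1 < Nat.find hex by omega)
      (by rw [Nat.sub_add_cancel hN]; exact hx.2)
  · rcases h : Nat.find hex with _ | k
    · exact hx.1
    · exact (not_le.1 (Nat.find_min hex (h ▸ k.lt_succ_self))).le

noncomputable section

def hingeRight (t : ℝ) : C(ℝ, ℝ) := ⟨fun x => (x - t)⁺, by fun_prop⟩

def hingeLeft (t : ℝ) : C(ℝ, ℝ) := ⟨fun x => (t - x)⁺, by fun_prop⟩

def hingeCone (a b : ℝ) : PointedCone ℝ C(ℝ, ℝ) :=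
  PointedCone.hull ℝ (insert 1 (hingeRight '' Icc a b ∪ hingeLeft '' Icc a b))

/-- The piecewise linear interpolant of `f` at the nodes `t 0, …, t N` when `t (i + 1) = t i + δ`:
the `i`-th summand rises by `f (t (i + 1)) - f (t i)` on `[t i, t (i + 1)]`. -/
def hingeInterpolant (f : ℝ → ℝ) (t : ℕ → ℝ) (δ : ℝ) (N : ℕ) : C(ℝ, ℝ) :=
  f (t 0) • 1 + δ⁻¹ • ∑ i ∈ Finset.range N,
    (f (t (i + 1)) - f (t i)) • (hingeRight (t i) - hingeRight (t (i + 1)))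

def setIntegralIccₗ (μ : Measure ℝ) [IsFiniteMeasureOnCompacts μ] (a b : ℝ) :
    C(ℝ, ℝ) →ₗ[ℝ] ℝ where
  toFun g := ∫ x in Icc a b, g x ∂μ
  map_add' g h := integral_add g.continuous.integrableOn_Icc h.continuous.integrableOn_Icc
  map_smul' c _ := integral_const_mul c _

end

@[simp] lemma hingeRight_apply (t x : ℝ) : hingeRight t x = (x - t)⁺ := rfl

@[simp] lemma hingeLeft_apply (t x : ℝ) : hingeLeft t x = (t - x)⁺ := rfl

@[simp] lemma setIntegralIccₗ_apply (μ : Measure ℝ) [IsFiniteMeasureOnCompacts μ] (a b : ℝ)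
    (g : C(ℝ, ℝ)) : setIntegralIccₗ μ a b g = ∫ x in Icc a b, g x ∂μ := rfl

lemma convexOn_hingeRight {s : Set ℝ} (hs : Convex ℝ s) (t : ℝ) : ConvexOn ℝ s (hingeRight t) :=
  ((convexOn_id hs).sub (concaveOn_const t hs)).sup (convexOn_const 0 hs)

lemma convexOn_hingeLeft {s : Set ℝ} (hs : Convex ℝ s) (t : ℝ) : ConvexOn ℝ s (hingeLeft t) :=
  ((convexOn_const t hs).sub (concaveOn_id hs)).sup (convexOn_const 0 hs)

lemma setIntegral_Icc_posPart_sub_const (μ : Measure ℝ) {a b t : ℝ} (ht : a ≤ t) :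
    ∫ x in Icc a b, (x - t)⁺ ∂μ = ∫ x in Icc t b, (x - t) ∂μ := by
  rw [setIntegral_eq_of_subset_of_forall_sdiff_eq_zero measurableSet_Icc (Icc_subset_Icc_left ht)]
  · exact setIntegral_congr_fun measurableSet_Icc fun x hx => posPart_of_nonneg (sub_nonneg.2 hx.1)
  · rintro x ⟨hx, hxt⟩
    exact posPart_eq_zero.2 (sub_nonpos.2 (not_lt.1 fun h => hxt ⟨h.le, hx.2⟩))

lemma setIntegral_Icc_posPart_const_sub (μ : Measure ℝ) {a b t : ℝ} (ht : t ≤ b) :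
    ∫ x in Icc a b, (t - x)⁺ ∂μ = ∫ x in Icc a t, (t - x) ∂μ := by
  rw [setIntegral_eq_of_subset_of_forall_sdiff_eq_zero measurableSet_Icc (Icc_subset_Icc_right ht)]
  · exact setIntegral_congr_fun measurableSet_Icc fun x hx => posPart_of_nonneg (sub_nonneg.2 hx.2)
  · rintro x ⟨hx, hxt⟩
    exact posPart_eq_zero.2 (sub_nonpos.2 (not_lt.1 fun h => hxt ⟨hx.1, h.le⟩))

section Interpolant

variable {f : ℝ → ℝ} {t : ℕ → ℝ} {δ : ℝ} {N : ℕ}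

lemma monotone_of_forall_succ_eq_add (hδ : 0 ≤ δ) (ht : ∀ i, t (i + 1) = t i + δ) : Monotone t :=
  monotone_nat_of_le_succ fun i => by rw [ht]; linarith

lemma hingeInterpolant_apply (x : ℝ) : hingeInterpolant f t δ N x = f (t 0) + δ⁻¹ *
    ∑ i ∈ Finset.range N, (f (t (i + 1)) - f (t i)) * ((x - t i)⁺ - (x - t (i + 1))⁺) := by
  simp [hingeInterpolant]

lemma hingeInterpolant_apply_of_mem_Icc (hδ : 0 < δ) (ht : ∀ i, t (i + 1) = t i + δ) {k : ℕ}
    (hk : k < N) {x : ℝ} (hx : x ∈ Icc (t k) (t (k + 1))) :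
    hingeInterpolant f t δ N x = f (t k) + (f (t (k + 1)) - f (t k)) / δ * (x - t k) := by
  have hmono := monotone_of_forall_succ_eq_add hδ.le ht
  have hbelow : ∀ i < k, (x - t i)⁺ - (x - t (i + 1))⁺ = δ := fun i hi => by
    have := hmono (Nat.succ_le_of_lt hi)
    rw [posPart_of_nonneg (by linarith [hmono (Nat.le_succ i), hx.1]),
      posPart_of_nonneg (by linarith [hx.1]), ht]
    ring
  have habove : ∀ i ∈ Finset.Ico (k + 1) N, (x - t i)⁺ - (x - t (i + 1))⁺ = 0 := fun i hi => by
    have := hmono (Finset.mem_Ico.1 hi).1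
    rw [posPart_eq_zero.2 (by linarith [hx.2]),
      posPart_eq_zero.2 (by linarith [hx.2, hmono (Nat.le_succ i)]), sub_zero]
  rw [hingeInterpolant_apply, ← Finset.sum_range_add_sum_Ico _ hk.le,
    Finset.sum_eq_sum_Ico_succ_bot hk,
    Finset.sum_eq_zero (s := Finset.Ico (k + 1) N) fun i hi => by rw [habove i hi, mul_zero],
    Finset.sum_congr (s₁ := Finset.range k) rfl fun i hi => by
      rw [hbelow i (Finset.mem_range.1 hi)],
    ← Finset.sum_mul, Finset.sum_range_sub (fun i => f (t i)),
    posPart_of_nonneg (sub_nonneg.2 hx.1), posPart_eq_zero.2 (sub_nonpos.2 hx.2)]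
  field_simp
  ring

lemma abs_sub_hingeInterpolant_le (hδ : 0 < δ) (ht : ∀ i, t (i + 1) = t i + δ) (hN : 0 < N)
    {ε : ℝ} (hf : ∀ x ∈ Icc (t 0) (t N), ∀ y ∈ Icc (t 0) (t N), |x - y| ≤ δ → |f x - f y| ≤ ε)
    {x : ℝ} (hx : x ∈ Icc (t 0) (t N)) : |f x - hingeInterpolant f t δ N x| ≤ 2 * ε := by
  have hmono := monotone_of_forall_succ_eq_add hδ.le ht
  have hmem : ∀ i ≤ N, t i ∈ Icc (t 0) (t N) := fun i hi => ⟨hmono i.zero_le, hmono hi⟩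
  obtain ⟨k, hk, hxk⟩ := exists_lt_mem_Icc_succ hN hx
  have h₁ : |f x - f (t k)| ≤ ε := hf x hx _ (hmem k hk.le) <| by
    rw [abs_of_nonneg (sub_nonneg.2 hxk.1)]
    linarith [hxk.2, ht k]
  have h₂ : |f (t (k + 1)) - f (t k)| ≤ ε := hf _ (hmem _ hk) _ (hmem k hk.le) <| by
    rw [ht, add_sub_cancel_left, abs_of_pos hδ]
  have h₃ : |(f (t (k + 1)) - f (t k)) / δ * (x - t k)| ≤ ε := by
    rw [abs_mul, abs_div, abs_of_pos hδ, abs_of_nonneg (sub_nonneg.2 hxk.1)]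
    calc |f (t (k + 1)) - f (t k)| / δ * (x - t k) ≤ |f (t (k + 1)) - f (t k)| / δ * δ := by
          gcongr
          linarith [hxk.2, ht k]
      _ ≤ ε := by rwa [div_mul_cancel₀ _ hδ.ne']
  rw [hingeInterpolant_apply_of_mem_Icc hδ ht hk hxk, ← sub_sub, two_mul]
  exact (abs_sub _ _).trans (add_le_add h₁ h₃)

lemma hingeInterpolant_apply_eq_sub_sum_negPart_add (hδ : δ ≠ 0) (ht : ∀ i, t (i + 1) = t i + δ)
    (x : ℝ) : hingeInterpolant f t δ N x =
      f (t 0) - ∑ i ∈ Finset.range N, (f (t (i + 1)) - f (t i))⁻ + δ⁻¹ *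
        (∑ i ∈ Finset.range N, (f (t (i + 1)) - f (t i))⁺ * ((x - t i)⁺ - (x - t (i + 1))⁺)
          + ∑ i ∈ Finset.range N,
              (f (t (i + 1)) - f (t i))⁻ * ((t (i + 1) - x)⁺ - (t i - x)⁺)) := by
  have hsplit : ∀ i ∈ Finset.range N,
      (f (t (i + 1)) - f (t i))⁺ * ((x - t i)⁺ - (x - t (i + 1))⁺)
        + (f (t (i + 1)) - f (t i))⁻ * ((t (i + 1) - x)⁺ - (t i - x)⁺)
      = (f (t (i + 1)) - f (t i)) * ((x - t i)⁺ - (x - t (i + 1))⁺)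
        + δ * (f (t (i + 1)) - f (t i))⁻ := fun i _ => by
    linear_combination (f (t (i + 1)) - f (t i))⁻ * (posPart_sub_sub_posPart_sub x (t i)
      - posPart_sub_sub_posPart_sub x (t (i + 1)) + ht i)
      + ((x - t i)⁺ - (x - t (i + 1))⁺) * posPart_sub_negPart (f (t (i + 1)) - f (t i))
  rw [hingeInterpolant_apply, ← Finset.sum_add_distrib, Finset.sum_congr rfl hsplit,
    Finset.sum_add_distrib, ← Finset.mul_sum, mul_add, inv_mul_cancel_left₀ hδ]
  ring

lemma exists_mem_hingeCone_eqOn_hingeInterpolant (hconv : ConvexOn ℝ (Icc (t 0) (t N)) f)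
    (hpos : ∀ x ∈ Icc (t 0) (t N), 0 ≤ f x) (hδ : 0 < δ) (ht : ∀ i, t (i + 1) = t i + δ) :
    ∃ g ∈ hingeCone (t 0) (t N), EqOn g (hingeInterpolant f t δ N) (Icc (t 0) (t N)) := by
  set C := hingeCone (t 0) (t N)
  set d : ℕ → ℝ := fun i => f (t (i + 1)) - f (t i)
  have hmono := monotone_of_forall_succ_eq_add hδ.le ht
  have hmem : ∀ i ≤ N, t i ∈ Icc (t 0) (t N) := fun i hi => ⟨hmono i.zero_le, hmono hi⟩
  have hd : ∀ i k, i ≤ k → k < N → d i ≤ d k := fun i k hik hk => by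
    simp only [d, ht]
    exact hconv.sub_le_sub_of_le (hmem i (by omega)) (ht k ▸ hmem (k + 1) hk) (hmono hik) hδ
  obtain ⟨j, hj, hjmin⟩ := (Finset.range (N + 1)).exists_min_image (fun i => f (t i)) ⟨0, by simp⟩
  rw [Finset.mem_range, Nat.lt_succ_iff] at hj
  have hneg : ∑ i ∈ Finset.range N, (d i)⁻ = f (t 0) - f (t j) :=
    sum_negPart_sub_eq_sub_of_forall_le (y := fun i => f (t i)) hd hj
      fun k hk => hjmin k (Finset.mem_range.2 (Nat.lt_succ_of_le hk))
  have hR : ∀ i ≤ N, hingeRight (t i) ∈ C := fun i hi =>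
    PointedCone.subset_hull (.inr (.inl ⟨t i, hmem i hi, rfl⟩))
  have hL : ∀ i ≤ N, hingeLeft (t i) ∈ C := fun i hi =>
    PointedCone.subset_hull (.inr (.inr ⟨t i, hmem i hi, rfl⟩))
  have hP := C.sum_smul_sub_succ_add_mem (s := fun i => (d i)⁺)
    (fun i hi => posPart_mono (hd i (i + 1) (by omega) hi)) (posPart_nonneg _) hR
  have hM := C.sum_smul_succ_sub_add_mem (s := fun i => (d i)⁻)
    (fun i hi => negPart_anti (hd i (i + 1) (by omega) hi)) (negPart_nonneg _) hL
  refine ⟨f (t j) • 1 + δ⁻¹ • _ + δ⁻¹ • _, C.add_mem (C.add_mem (C.smul_mem (hpos _ (hmem j hj))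
    (PointedCone.subset_hull (.inl rfl))) (C.smul_mem (inv_nonneg.2 hδ.le) hP))
    (C.smul_mem (inv_nonneg.2 hδ.le) hM), fun x hx => ?_⟩
  simp only [smul_add, ContinuousMap.add_apply, ContinuousMap.coe_smul, ContinuousMap.coe_one,
    Pi.smul_apply, Pi.one_apply, smul_eq_mul, mul_one, ContinuousMap.coe_sum, ContinuousMap.coe_sub,
    Finset.sum_apply, Pi.sub_apply, hingeRight_apply, hingeLeft_apply,
    posPart_eq_zero.2 (sub_nonpos.2 hx.2), posPart_eq_zero.2 (sub_nonpos.2 hx.1), mul_zero,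
    add_zero]
  rw [hingeInterpolant_apply_eq_sub_sum_negPart_add hδ.ne' ht, hneg]
  ring

end Interpolant

theorem ConvexOn.exists_mem_hingeCone_abs_sub_le {f : ℝ → ℝ} {a b ε : ℝ}
    (hconv : ConvexOn ℝ (Icc a b) f) (hf : ContinuousOn f (Icc a b))
    (hpos : ∀ x ∈ Icc a b, 0 ≤ f x) (hε : 0 < ε) :
    ∃ g ∈ hingeCone a b, ∀ x ∈ Icc a b, |f x - g x| ≤ ε := by
  rcases le_or_gt b a with hba | hab
  · refine ⟨(f a)⁺ • 1, PointedCone.smul_mem _ (posPart_nonneg _)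
      (PointedCone.subset_hull (.inl rfl)), fun x hx => ?_⟩
    obtain rfl : x = a := le_antisymm (hx.2.trans hba) hx.1
    simp [posPart_of_nonneg (hpos x hx), hε.le]
  obtain ⟨η, hη, hfη⟩ := Metric.uniformContinuousOn_iff_le.1
    (isCompact_Icc.uniformContinuousOn_of_continuous hf) (ε / 2) (half_pos hε)
  obtain ⟨N, hN⟩ := exists_nat_gt ((b - a) / η)
  have hN₀ : (0 : ℝ) < N := (div_pos (sub_pos.2 hab) hη).trans hN
  set δ := (b - a) / N
  set t : ℕ → ℝ := fun i => a + i * δ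
  have ht : ∀ i, t (i + 1) = t i + δ := fun i => by simp only [t]; push_cast; ring
  have ht₀ : t 0 = a := by simp [t]
  have htN : t N = b := by simp only [t, δ]; field_simp; ring
  have hδ : 0 < δ := div_pos (sub_pos.2 hab) hN₀
  have hδη : δ ≤ η := by
    rw [div_lt_iff₀ hη] at hN
    exact (div_le_iff₀ hN₀).2 (by linarith)
  rw [← ht₀, ← htN] at hconv hpos hfη ⊢
  obtain ⟨g, hg, hgf⟩ := exists_mem_hingeCone_eqOn_hingeInterpolant hconv hpos hδ ht
  refine ⟨g, hg, fun x hx => ?_⟩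
  rw [hgf hx]
  have := abs_sub_hingeInterpolant_le hδ ht (by exact_mod_cast hN₀) (ε := ε / 2)
    (fun x hx y hy hxy => hfη x hx y hy (hxy.trans hδη)) hx
  linarith

lemma abs_setIntegral_sub_le {μ : Measure ℝ} [IsFiniteMeasureOnCompacts μ] {a b ε : ℝ}
    {f g : ℝ → ℝ} (hf : ContinuousOn f (Icc a b)) (hg : Continuous g)
    (hfg : ∀ x ∈ Icc a b, |f x - g x| ≤ ε) :
    |∫ x in Icc a b, f x ∂μ - ∫ x in Icc a b, g x ∂μ| ≤ ε * μ.real (Icc a b) := by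
  rw [← integral_sub (hf.integrableOn_compact isCompact_Icc) hg.integrableOn_Icc]
  exact norm_setIntegral_le_of_norm_le_const (f := fun x => f x - g x)
    isCompact_Icc.measure_lt_top hfg

lemma setIntegral_sub_setIntegral_nonneg_of_approx {μ₁ μ₂ : Measure ℝ}
    [IsFiniteMeasureOnCompacts μ₁] [IsFiniteMeasureOnCompacts μ₂] {a b : ℝ} {f : ℝ → ℝ}
    (hf : ContinuousOn f (Icc a b))
    (happrox : ∀ ε > 0, ∃ g : C(ℝ, ℝ), 0 ≤ (∫ x in Icc a b, g x ∂μ₁) - ∫ x in Icc a b, g x ∂μ₂ ∧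
      ∀ x ∈ Icc a b, |f x - g x| ≤ ε) :
    0 ≤ (∫ x in Icc a b, f x ∂μ₁) - ∫ x in Icc a b, f x ∂μ₂ := by
  set M := μ₁.real (Icc a b) + μ₂.real (Icc a b)
  have hM : 0 ≤ M := by positivity
  refine le_of_forall_pos_le_add fun η hη => ?_
  obtain ⟨g, hg, hfg⟩ := happrox (η / (M + 1)) (by positivity)
  have h₁ := abs_le.1 (abs_setIntegral_sub_le (μ := μ₁) hf g.continuous hfg)
  have h₂ := abs_le.1 (abs_setIntegral_sub_le (μ := μ₂) hf g.continuous hfg)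
  have hηM : η / (M + 1) * M ≤ η := by
    rw [div_mul_eq_mul_div, div_le_iff₀ (by linarith)]
    nlinarith
  linarith [h₁.1, h₂.2]

lemma setIntegral_sub_setIntegral_nonneg_of_mem_hingeCone (μ₁ μ₂ : Measure ℝ)
    [IsFiniteMeasureOnCompacts μ₁] [IsFiniteMeasureOnCompacts μ₂] {a b : ℝ}
    (hmass : 0 ≤ (μ₁ (Icc a b)).toReal - (μ₂ (Icc a b)).toReal)
    (hend : ∀ t ∈ Icc a b,
      0 ≤ (∫ x in Icc a t, (t - x) ∂μ₁) - (∫ x in Icc a t, (t - x) ∂μ₂) ∧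
      0 ≤ (∫ x in Icc t b, (x - t) ∂μ₁) - ∫ x in Icc t b, (x - t) ∂μ₂)
    {g : C(ℝ, ℝ)} (hg : g ∈ hingeCone a b) :
    0 ≤ (∫ x in Icc a b, g x ∂μ₁) - ∫ x in Icc a b, g x ∂μ₂ := by
  refine (setIntegralIccₗ μ₁ a b - setIntegralIccₗ μ₂ a b).nonneg_of_mem_hull ?_ hg
  rintro _ (rfl | ⟨t, ht, rfl⟩ | ⟨t, ht, rfl⟩)
  · simpa [measureReal_def] using hmass
  · simpa [setIntegral_Icc_posPart_sub_const _ ht.1] using (hend t ht).2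
  · simpa [setIntegral_Icc_posPart_const_sub _ ht.2] using (hend t ht).1

theorem steffensen_popoviciu_iff_endpoints_positivity_general
    (a b : ℝ)
    (μ₁ μ₂ : Measure ℝ) [IsFiniteMeasure μ₁] [IsFiniteMeasure μ₂]
    (hmass : 0 < (μ₁ (Set.Icc a b)).toReal - (μ₂ (Set.Icc a b)).toReal) :
    (∀ f : ℝ → ℝ, ContinuousOn f (Set.Icc a b) → ConvexOn ℝ (Set.Icc a b) f →
        (∀ x ∈ Set.Icc a b, 0 ≤ f x) →
        0 ≤ (∫ x in Set.Icc a b, f x ∂μ₁) - ∫ x in Set.Icc a b, f x ∂μ₂) ↔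
      (∀ t ∈ Set.Icc a b,
        0 ≤ (∫ x in Set.Icc a t, (t - x) ∂μ₁) - (∫ x in Set.Icc a t, (t - x) ∂μ₂) ∧
        0 ≤ (∫ x in Set.Icc t b, (x - t) ∂μ₁) - ∫ x in Set.Icc t b, (x - t) ∂μ₂) := by
  refine ⟨fun hSP t ht => ⟨?_, ?_⟩, fun hend f hf hconv hpos => ?_⟩
  · simpa [setIntegral_Icc_posPart_const_sub _ ht.2] using
      hSP _ (hingeLeft t).continuous.continuousOn (convexOn_hingeLeft (convex_Icc a b) t)
        fun x _ => posPart_nonneg _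
  · simpa [setIntegral_Icc_posPart_sub_const _ ht.1] using
      hSP _ (hingeRight t).continuous.continuousOn (convexOn_hingeRight (convex_Icc a b) t)
        fun x _ => posPart_nonneg _
  · refine setIntegral_sub_setIntegral_nonneg_of_approx hf fun ε hε => ?_
    obtain ⟨g, hg, hfg⟩ := hconv.exists_mem_hingeCone_abs_sub_le hf hpos hε
    exact ⟨g, setIntegral_sub_setIntegral_nonneg_of_mem_hingeCone μ₁ μ₂ hmass.le hend hg, hfg⟩

/-- Lemma (Popoviciu–Fink): a real Borel measure `μ = μ₁ - μ₂` on `[a, b]` with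
`μ([a, b]) > 0` is a Steffensen–Popoviciu measure (i.e. `∫ f dμ ≥ 0` for every
continuous convex `f : [a, b] → [0, ∞)`) if and only if it satisfies the
endpoints-positivity conditions `∫_a^t (t - x) dμ ≥ 0` and `∫_t^b (x - t) dμ ≥ 0`
for every `t ∈ [a, b]`. Here the signed measure is represented as the difference
of two finite Borel measures `μ₁`, `μ₂` carried by `[a, b]`. -/
theorem steffensen_popoviciu_iff_endpoints_positivity
    (a b : ℝ) (hab : a ≤ b)
    (μ₁ μ₂ : Measure ℝ) [IsFiniteMeasure μ₁] [IsFiniteMeasure μ₂]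
    (hμ₁ : μ₁ (Set.Icc a b)ᶜ = 0) (hμ₂ : μ₂ (Set.Icc a b)ᶜ = 0)
    (hmass : 0 < (μ₁ (Set.Icc a b)).toReal - (μ₂ (Set.Icc a b)).toReal) :
    (∀ f : ℝ → ℝ, ContinuousOn f (Set.Icc a b) → ConvexOn ℝ (Set.Icc a b) f →
        (∀ x ∈ Set.Icc a b, 0 ≤ f x) →
        0 ≤ (∫ x in Set.Icc a b, f x ∂μ₁) - ∫ x in Set.Icc a b, f x ∂μ₂) ↔
      (∀ t ∈ Set.Icc a b,
        0 ≤ (∫ x in Set.Icc a t, (t - x) ∂μ₁) - (∫ x in Set.Icc a t, (t - x) ∂μ₂) ∧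
        0 ≤ (∫ x in Set.Icc t b, (x - t) ∂μ₁) - ∫ x in Set.Icc t b, (x - t) ∂μ₂) :=
  steffensen_popoviciu_iff_endpoints_positivity_general a b μ₁ μ₂ hmass
end

section
/- Let x_1 ≤ x_2 ≤ … ≤ x_n be points of an interval [a,b] and let p_1, …, p_n be real numbers satisfying Steffensen's condition: Σ_{k=1}^n p_k > 0 and 0 ≤ Σ_{k=1}^m p_k ≤ Σ_{k=1}^n p_k for every m ∈ {1, …, n}. Then the discrete measure μ = Σ_{k=1}^n p_k δ_{x_k} is a Steffensen-Popoviciu measure on [a,b]; that is, Σ_{k=1}^n p_k f(x_k) ≥ 0 for every continuous convex function f : [a,b] → [0,∞). -/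
/-!
Along the ordered points, `k ↦ f (x k)` decreases up to an index `m` where it is minimal and
increases afterwards, by the maximum principle for convex functions. Writing it as the sum of the
antitone sequence `f (x (min k m))` and the monotone sequence `f (x (max k m)) - f (x m)`, Abel
summation bounds `∑ p k * f (x k)` below by `(∑ p k) * f (x m) ≥ 0`: the antitone part needs the
partial sums of `p` to be nonnegative, the monotone part needs them to stay below the total.
-/

open Finset

section AbelSummation

variable {p u : ℕ → ℝ} {n : ℕ}

theorem mul_le_sum_range_mul_of_antitoneOn (hS : ∀ j ≤ n, 0 ≤ ∑ k ∈ range j, p k)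
    (hu : AntitoneOn u (Set.Iio n)) :
    (∑ k ∈ range n, p k) * u (n - 1) ≤ ∑ k ∈ range n, p k * u k := by
  have hby_parts := sum_range_by_parts u p n
  simp only [smul_eq_mul] at hby_parts
  have hdiff : ∑ i ∈ range (n - 1), (u (i + 1) - u i) * ∑ k ∈ range (i + 1), p k ≤ 0 := by
    refine sum_nonpos fun i hi => mul_nonpos_of_nonpos_of_nonneg ?_ (hS _ (by grind))
    exact sub_nonpos.2 (hu (by grind) (by grind) i.le_succ)
  simp only [mul_comm (p _)] at hby_parts ⊢
  linarith

theorem mul_le_sum_range_mul_of_monotoneOn (hS : ∀ j ≤ n, ∑ k ∈ range j, p k ≤ ∑ k ∈ range n, p k)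
    (hu : MonotoneOn u (Set.Iio n)) :
    (∑ k ∈ range n, p k) * u 0 ≤ ∑ k ∈ range n, p k * u k := by
  have hby_parts := sum_range_by_parts u p n
  simp only [smul_eq_mul] at hby_parts
  have hdiff : ∑ i ∈ range (n - 1), (u (i + 1) - u i) * ∑ k ∈ range (i + 1), p k ≤
      (u (n - 1) - u 0) * ∑ k ∈ range n, p k := by
    rw [← sum_range_sub u, sum_mul]
    refine sum_le_sum fun i hi => mul_le_mul_of_nonneg_left (hS _ (by grind)) ?_
    exact sub_nonneg.2 (hu (by grind) (by grind) i.le_succ)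
  simp only [mul_comm (p _)] at hby_parts ⊢
  linarith

end AbelSummation

theorem mul_le_sum_range_mul_of_antitoneOn_of_monotoneOn {p g : ℕ → ℝ} {n m : ℕ} (hm : m < n)
    (hS_nonneg : ∀ j ≤ n, 0 ≤ ∑ k ∈ range j, p k)
    (hS_le : ∀ j ≤ n, ∑ k ∈ range j, p k ≤ ∑ k ∈ range n, p k)
    (hanti : AntitoneOn g (Set.Iic m)) (hmono : MonotoneOn g (Set.Ico m n)) :
    (∑ k ∈ range n, p k) * g m ≤ ∑ k ∈ range n, p k * g k := by
  set u : ℕ → ℝ := fun k => g (min k m)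
  set v : ℕ → ℝ := fun k => g (max k m) - g m
  have hu : Antitone u := fun i j hij =>
    hanti (Set.mem_Iic.2 (min_le_right _ _)) (Set.mem_Iic.2 (min_le_right _ _))
      (min_le_min_right m hij)
  have hv : MonotoneOn v (Set.Iio n) := fun i hi j hj hij =>
    sub_le_sub_right (hmono ⟨le_max_right _ _, max_lt hi hm⟩ ⟨le_max_right _ _, max_lt hj hm⟩
      (max_le_max_right m hij)) _
  have hsplit : ∀ k, g k = u k + v k := fun k => by
    rcases le_total k m with h | h <;> simp [u, v, h]
  calc (∑ k ∈ range n, p k) * g m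
      = (∑ k ∈ range n, p k) * u (n - 1) + (∑ k ∈ range n, p k) * v 0 := by
        simp [u, v, Nat.le_sub_one_of_lt hm]
    _ ≤ (∑ k ∈ range n, p k * u k) + ∑ k ∈ range n, p k * v k :=
        add_le_add (mul_le_sum_range_mul_of_antitoneOn hS_nonneg (hu.antitoneOn _))
          (mul_le_sum_range_mul_of_monotoneOn hS_le hv)
    _ = ∑ k ∈ range n, p k * g k := by simp only [← sum_add_distrib, ← mul_add, ← hsplit]

section ConvexComp

variable {ι : Type*} [Preorder ι] {s : Set ℝ} {f : ℝ → ℝ} {x : ι → ℝ} {t : Set ι} {m : ι}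

theorem ConvexOn.antitoneOn_comp_of_isMinOn (hf : ConvexOn ℝ s f) (hx : MonotoneOn x t)
    (hxs : Set.MapsTo x t s) (hm : m ∈ t) (hmin : IsMinOn (f ∘ x) t m) :
    AntitoneOn (f ∘ x) (t ∩ Set.Iic m) := fun _ ⟨hi, _⟩ _ ⟨hj, hjm⟩ hij =>
  (hf.le_max_of_mem_Icc (hxs hi) (hxs hm) ⟨hx hi hj hij, hx hj hm hjm⟩).trans
    (max_le le_rfl (hmin hi))

theorem ConvexOn.monotoneOn_comp_of_isMinOn (hf : ConvexOn ℝ s f) (hx : MonotoneOn x t)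
    (hxs : Set.MapsTo x t s) (hm : m ∈ t) (hmin : IsMinOn (f ∘ x) t m) :
    MonotoneOn (f ∘ x) (t ∩ Set.Ici m) := fun _ ⟨hi, hmi⟩ _ ⟨hj, _⟩ hij =>
  (hf.le_max_of_mem_Icc (hxs hm) (hxs hj) ⟨hx hm hi hmi, hx hi hj hij⟩).trans
    (max_le (hmin hj) le_rfl)

end ConvexComp

theorem steffensen_condition_implies_SP_general
    (a b : ℝ) (n : ℕ)
    (x : ℕ → ℝ) (p : ℕ → ℝ)
    (hx_mem : ∀ k < n, x k ∈ Set.Icc a b)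
    (hx_mono : ∀ i j, i ≤ j → j < n → x i ≤ x j)
    (hp_pos : 0 < ∑ k ∈ Finset.range n, p k)
    (hp_partial : ∀ m, 1 ≤ m → m ≤ n →
      0 ≤ (∑ k ∈ Finset.range m, p k) ∧
      (∑ k ∈ Finset.range m, p k) ≤ ∑ k ∈ Finset.range n, p k)
    (f : ℝ → ℝ)
    (hf_conv : ConvexOn ℝ (Set.Icc a b) f)
    (hf_nonneg : ∀ t ∈ Set.Icc a b, 0 ≤ f t) :
    0 ≤ ∑ k ∈ Finset.range n, p k * f (x k) := by
  have hn : 0 < n := Nat.pos_of_ne_zero fun h => by simp [h] at hp_pos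
  have hx : MonotoneOn x (Set.Iio n) := fun i _ j hj hij => hx_mono i j hij hj
  obtain ⟨m, hm, hmin⟩ := Set.exists_min_image _ (f ∘ x) (Set.finite_Iio n) ⟨0, hn⟩
  have hS_nonneg : ∀ j ≤ n, 0 ≤ ∑ k ∈ range j, p k := fun j hj => by
    rcases j.eq_zero_or_pos with rfl | hj0
    · simp
    · exact (hp_partial j hj0 hj).1
  have hS_le : ∀ j ≤ n, ∑ k ∈ range j, p k ≤ ∑ k ∈ range n, p k := fun j hj => by
    rcases j.eq_zero_or_pos with rfl | hj0
    · simpa using hp_pos.le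
    · exact (hp_partial j hj0 hj).2
  have hanti := hf_conv.antitoneOn_comp_of_isMinOn hx hx_mem hm (isMinOn_iff.2 hmin)
  have hmono := hf_conv.monotoneOn_comp_of_isMinOn hx hx_mem hm (isMinOn_iff.2 hmin)
  calc 0 ≤ (∑ k ∈ range n, p k) * f (x m) := mul_nonneg hp_pos.le (hf_nonneg _ (hx_mem m hm))
    _ ≤ ∑ k ∈ range n, p k * f (x k) :=
      mul_le_sum_range_mul_of_antitoneOn_of_monotoneOn hm hS_nonneg hS_le
        (hanti.mono fun k hk => ⟨Set.Iic_subset_Iio.2 hm hk, hk⟩)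
        (hmono.mono fun k hk => ⟨hk.2, hk.1⟩)

/-- Example 1: a discrete measure `Σ p_k δ_{x_k}` supported by points
`x_1 ≤ … ≤ x_n` of `[a, b]` satisfying Steffensen's condition is a
Steffensen–Popoviciu measure: `Σ p_k f(x_k) ≥ 0` for every continuous convex
`f : [a, b] → [0, ∞)`. -/
theorem steffensen_condition_implies_SP
    (a b : ℝ) (hab : a ≤ b) (n : ℕ)
    (x : ℕ → ℝ) (p : ℕ → ℝ)
    (hx_mem : ∀ k < n, x k ∈ Set.Icc a b)
    (hx_mono : ∀ i j, i ≤ j → j < n → x i ≤ x j)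
    (hp_pos : 0 < ∑ k ∈ Finset.range n, p k)
    (hp_partial : ∀ m, 1 ≤ m → m ≤ n →
      0 ≤ (∑ k ∈ Finset.range m, p k) ∧
      (∑ k ∈ Finset.range m, p k) ≤ ∑ k ∈ Finset.range n, p k)
    (f : ℝ → ℝ) (hf_cont : ContinuousOn f (Set.Icc a b))
    (hf_conv : ConvexOn ℝ (Set.Icc a b) f)
    (hf_nonneg : ∀ t ∈ Set.Icc a b, 0 ≤ f t) :
    0 ≤ ∑ k ∈ Finset.range n, p k * f (x k) :=
  steffensen_condition_implies_SP_general a b n x p hx_mem hx_mono hp_pos hp_partial f hf_conv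
    hf_nonneg
end

section
/- For every a < b, the discrete measure μ = (5/9) δ_{(3a+b)/4} − (1/9) δ_{(a+b)/2} + (5/9) δ_{(a+3b)/4} is a Steffensen-Popoviciu measure on [a,b]; that is, μ([a,b]) = 1 > 0 and (5/9) f((3a+b)/4) − (1/9) f((a+b)/2) + (5/9) f((a+3b)/4) ≥ 0 for every continuous convex function f : [a,b] → [0,∞). -/
/-! Convexity bounds the middle value by the average of the two outer ones,
`f ((a + b) / 2) ≤ (f ((3a+b)/4) + f ((a+3b)/4)) / 2`, so the negative mass `1/9` at the midpoint
is outweighed by the masses `5/9` at the two outer points once `f ≥ 0`. -/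

namespace ConvexOn

variable {s : Set ℝ} {f : ℝ → ℝ} {x y : ℝ}

theorem apply_midpoint_le (hf : ConvexOn ℝ s f) (hx : x ∈ s) (hy : y ∈ s) :
    f ((x + y) / 2) ≤ (f x + f y) / 2 := by
  have h := hf.2 hx hy (by norm_num : (0 : ℝ) ≤ 1 / 2) (by norm_num : (0 : ℝ) ≤ 1 / 2)
    (by norm_num)
  have hxy : (1 / 2 : ℝ) • x + (1 / 2 : ℝ) • y = (x + y) / 2 := by
    simp only [smul_eq_mul]; ring
  rw [hxy, smul_eq_mul, smul_eq_mul] at h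
  linarith

theorem mul_sub_mul_midpoint_add_mul_nonneg (hf : ConvexOn ℝ s f)
    (hf₀ : ∀ z ∈ s, 0 ≤ f z) (hx : x ∈ s) (hy : y ∈ s) {c d : ℝ} (hd : 0 ≤ d)
    (hdc : d ≤ 2 * c) :
    0 ≤ c * f x - d * f ((x + y) / 2) + c * f y := by
  have hmid := mul_le_mul_of_nonneg_left (hf.apply_midpoint_le hx hy) hd
  have hsum : 0 ≤ (c - d / 2) * (f x + f y) :=
    mul_nonneg (by linarith) (add_nonneg (hf₀ x hx) (hf₀ y hy))
  linarith

end ConvexOn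

/-- The concrete example of Example 1: the discrete measure
`(5/9) δ_{(3a+b)/4} − (1/9) δ_{(a+b)/2} + (5/9) δ_{(a+3b)/4}` is a
Steffensen–Popoviciu measure on `[a, b]`: it has total mass `1 > 0` and
integrates every continuous convex `f : [a, b] → [0, ∞)` to a nonnegative
number. -/
theorem concrete_discrete_SP_measure
    (a b : ℝ) (hab : a < b) :
    ((5 : ℝ) / 9 - 1 / 9 + 5 / 9 = 1 ∧ (0 : ℝ) < 5 / 9 - 1 / 9 + 5 / 9) ∧
      ∀ f : ℝ → ℝ, ContinuousOn f (Set.Icc a b) → ConvexOn ℝ (Set.Icc a b) f →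
        (∀ x ∈ Set.Icc a b, 0 ≤ f x) →
        0 ≤ 5 / 9 * f ((3 * a + b) / 4) - 1 / 9 * f ((a + b) / 2)
          + 5 / 9 * f ((a + 3 * b) / 4) := by
  refine ⟨by norm_num, fun f _ hconv hf₀ => ?_⟩
  have hp : (3 * a + b) / 4 ∈ Set.Icc a b := ⟨by linarith, by linarith⟩
  have hq : (a + 3 * b) / 4 ∈ Set.Icc a b := ⟨by linarith, by linarith⟩
  have hm : ((3 * a + b) / 4 + (a + 3 * b) / 4) / 2 = (a + b) / 2 := by ring
  simpa only [hm] using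
    hconv.mul_sub_mul_midpoint_add_mul_nonneg hf₀ hp hq (c := 5 / 9) (d := 1 / 9)
      (by norm_num) (by norm_num)
end

section
/- For every a > 0, the measure (x²/a² − 1/6) dx is a Steffensen-Popoviciu measure on the interval [−a, a]; that is, its total mass ∫_{−a}^{a} (x²/a² − 1/6) dx = a/3 is positive and ∫_{−a}^{a} f(x) (x²/a² − 1/6) dx ≥ 0 for every continuous convex function f : [−a,a] → [0,∞). -/
/-!
The weight `x²/a² − 1/6 = (x + c)(x − c)/a²`, `c = a/√6`, is negative exactly on `(−c, c)`.
A convex `f` lies below its chord `L` over `[−c, c]` there and above it outside, so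
`f · w ≥ L · w` pointwise. Since `L` is affine and the weight is even with mass `a/3`,
`∫ L · w = L(0) · a/3 = (f(−c) + f(c))/2 · a/3 ≥ 0`.
-/

open MeasureTheory intervalIntegral

theorem ConvexOn.sub_chord_mul_nonneg {s : Set ℝ} {f : ℝ → ℝ} (hf : ConvexOn ℝ s f)
    {x y t : ℝ} (hx : x ∈ s) (hy : y ∈ s) (ht : t ∈ s) (hxy : x < y) :
    0 ≤ (f t - (f x + slope f x y * (t - x))) * ((t - x) * (t - y)) := by
  rcases eq_or_ne t x with rfl | htx
  · simp
  have hchord : f t - (f x + slope f x y * (t - x)) = (slope f x t - slope f x y) * (t - x) := by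
    have := sub_smul_slope f x t
    simp only [smul_eq_mul, vsub_eq_sub] at this
    linear_combination -this
  have hslope : 0 ≤ (slope f x t - slope f x y) * (t - y) := by
    have hmono := hf.slope_mono hx
    rcases le_total t y with hty | hyt
    · exact mul_nonneg_of_nonpos_of_nonpos
        (sub_nonpos.2 (hmono ⟨ht, htx⟩ ⟨hy, hxy.ne'⟩ hty)) (sub_nonpos.2 hty)
    · exact mul_nonneg (sub_nonneg.2 (hmono ⟨hy, hxy.ne'⟩ ⟨ht, htx⟩ hyt)) (sub_nonneg.2 hyt)
  rw [hchord]
  nlinarith [sq_nonneg (t - x)]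

theorem integral_affine_mul_quadratic_weight (a A B : ℝ) :
    ∫ x in (-a)..a, (A + B * x) * (x ^ 2 / a ^ 2 - 1 / 6) = A * (a / 3) := by
  rcases eq_or_ne a 0 with rfl | ha
  · simp
  have hderiv : ∀ x ∈ Set.uIcc (-a) a,
      HasDerivAt (fun x : ℝ => A * x ^ 3 / (3 * a ^ 2) - A * x / 6
        + (B * x ^ 4 / (4 * a ^ 2) - B * x ^ 2 / 12))
        ((A + B * x) * (x ^ 2 / a ^ 2 - 1 / 6)) x := by
    intro x _
    have h := ((((hasDerivAt_pow 3 x).const_mul A).div_const (3 * a ^ 2)).sub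
        (((hasDerivAt_id x).const_mul A).div_const 6)).add
      ((((hasDerivAt_pow 4 x).const_mul B).div_const (4 * a ^ 2)).sub
        (((hasDerivAt_pow 2 x).const_mul B).div_const 12))
    refine h.congr_deriv ?_
    field_simp
    ring
  rw [integral_eq_sub_of_hasDerivAt hderiv ((by fun_prop : Continuous _).intervalIntegrable _ _)]
  field_simp
  ring

theorem integral_chord_mul_quadratic_weight (f : ℝ → ℝ) (a : ℝ) {c : ℝ} (hc : c ≠ 0) :
    ∫ x in (-a)..a, (f (-c) + slope f (-c) c * (x - -c)) * (x ^ 2 / a ^ 2 - 1 / 6) =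
      (f (-c) + f c) / 2 * (a / 3) := by
  rw [← integral_affine_mul_quadratic_weight a _ (slope f (-c) c)]
  refine integral_congr fun x _ => ?_
  simp only [slope_def_field]
  field_simp
  ring

theorem quadratic_weight_eq {a c : ℝ} (ha : a ≠ 0) (hc : c ^ 2 = a ^ 2 / 6) (x : ℝ) :
    x ^ 2 / a ^ 2 - 1 / 6 = (x - -c) * (x - c) / a ^ 2 := by
  field_simp
  linear_combination 6 * hc

/-- Example 2 (first part): the absolutely continuous measure
`(x²/a² − 1/6) dx` is a Steffensen–Popoviciu measure on `[−a, a]`: its total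
mass equals `a/3 > 0` and it integrates every continuous convex
`f : [−a, a] → [0, ∞)` to a nonnegative number. -/
theorem quadratic_weight_SP_measure
    (a : ℝ) (ha : 0 < a) :
    ((∫ x in (-a)..a, (x ^ 2 / a ^ 2 - 1 / 6)) = a / 3 ∧
        (0 : ℝ) < a / 3) ∧
      ∀ f : ℝ → ℝ, ContinuousOn f (Set.Icc (-a) a) →
        ConvexOn ℝ (Set.Icc (-a) a) f →
        (∀ x ∈ Set.Icc (-a) a, 0 ≤ f x) →
        0 ≤ ∫ x in (-a)..a, f x * (x ^ 2 / a ^ 2 - 1 / 6) := by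
  refine ⟨⟨by simpa using integral_affine_mul_quadratic_weight a 1 0, by positivity⟩, ?_⟩
  intro f hfc hf hf0
  set c := Real.sqrt (a ^ 2 / 6)
  have hc2 : c ^ 2 = a ^ 2 / 6 := Real.sq_sqrt (by positivity)
  have hc0 : 0 < c := Real.sqrt_pos.2 (by positivity)
  have hca : c < a := by nlinarith
  have hcmem : c ∈ Set.Icc (-a) a := ⟨by linarith, hca.le⟩
  have hncmem : -c ∈ Set.Icc (-a) a := ⟨by linarith, by linarith⟩
  set L : ℝ → ℝ := fun x => f (-c) + slope f (-c) c * (x - -c)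
  have hpointwise : ∀ x ∈ Set.Icc (-a) a,
      L x * (x ^ 2 / a ^ 2 - 1 / 6) ≤ f x * (x ^ 2 / a ^ 2 - 1 / 6) := by
    intro x hx
    rw [quadratic_weight_eq ha.ne' hc2, ← sub_nonneg, ← sub_mul, ← mul_div_assoc]
    exact div_nonneg (hf.sub_chord_mul_nonneg hncmem hcmem hx (by linarith)) (sq_nonneg a)
  calc 0 ≤ (f (-c) + f c) / 2 * (a / 3) :=
        mul_nonneg (by linarith [hf0 _ hncmem, hf0 _ hcmem]) (by positivity)
    _ = ∫ x in (-a)..a, L x * (x ^ 2 / a ^ 2 - 1 / 6) :=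
        (integral_chord_mul_quadratic_weight f a hc0.ne').symm
    _ ≤ _ := integral_mono_on (by linarith)
        (((by fun_prop : Continuous L).mul (by fun_prop)).intervalIntegrable _ _)
        (ContinuousOn.intervalIntegrable (by rw [Set.uIcc_of_le (by linarith)]; fun_prop))
        hpointwise
end

section
/- Let 0 < a < b and c < d. Then the measure (x²/a² − 1/6) dx dy is a Steffensen-Popoviciu measure on the rectangle [−a, b] × [c, d]; that is, its total mass is positive and ∫_{−a}^{b} ∫_{c}^{d} h(x,y) (x²/a² − 1/6) dy dx ≥ 0 for every continuous convex function h : [−a,b] × [c,d] → [0,∞). -/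
/-! The weight `w x = x²/a² - 1/6` changes sign at `±r`, `r = a/√6`. Integrating out `y` turns
`h` into `g x = ∫ y in c..d, h (x, y)`, which is again continuous, convex and nonnegative, so it
suffices to show `∫ x in -a..b, g x * w x ≥ 0`. On `[a, b]` the weight is nonnegative. On
`[-a, a]` the chord `L` of `g` through `±r` lies above `g` where `w ≤ 0` and below `g` where
`w ≥ 0`, so `∫ g w ≥ ∫ L w = (a/3) · (g (-r) + g r)/2 ≥ 0`, the odd part of `L` integrating
to zero. For constant `g` the same bound gives the positivity of the total mass. -/

open MeasureTheory intervalIntegral Set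

theorem ConvexOn.secant_le_of_notMem_Ioo {s : Set ℝ} {f : ℝ → ℝ} (hf : ConvexOn ℝ s f)
    {p q x : ℝ} (hp : p ∈ s) (hq : q ∈ s) (hx : x ∈ s) (hpq : p < q)
    (hxpq : x ∉ Ioo p q) :
    (q - x) * f p + (x - p) * f q ≤ (q - p) * f x := by
  rcases not_and_or.mp hxpq with hxp | hqx
  · rcases (not_lt.mp hxp).lt_or_eq with hxp | rfl
    · linarith [hf.secant_mono_aux1 hx hq hxp hpq]
    · linarith
  · rcases (not_lt.mp hqx).lt_or_eq with hqx | rfl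
    · linarith [hf.secant_mono_aux1 hp hx hpq hqx]
    · linarith

theorem ConvexOn.secant_mul_le_mul {s : Set ℝ} {f w : ℝ → ℝ} (hf : ConvexOn ℝ s f)
    {p q x : ℝ} (hp : p ∈ s) (hq : q ∈ s) (hx : x ∈ s) (hpq : p < q)
    (hw_in : x ∈ Ioo p q → w x ≤ 0) (hw_out : x ∉ Ioo p q → 0 ≤ w x) :
    ((q - x) * f p + (x - p) * f q) / (q - p) * w x ≤ f x * w x := by
  have hqp : 0 < q - p := sub_pos.mpr hpq
  by_cases hxpq : x ∈ Ioo p q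
  · refine mul_le_mul_of_nonpos_right ?_ (hw_in hxpq)
    rw [le_div_iff₀' hqp]
    exact hf.secant_mono_aux1 hp hq hxpq.1 hxpq.2
  · refine mul_le_mul_of_nonneg_right ?_ (hw_out hxpq)
    rw [div_le_iff₀' hqp]
    exact hf.secant_le_of_notMem_Ioo hp hq hx hpq hxpq

theorem ConvexOn.parametric_intervalIntegral {E : Type*} [AddCommGroup E] [Module ℝ E]
    {s : Set E} {h : E × ℝ → ℝ} {c d : ℝ} (hcd : c ≤ d)
    (hh : ConvexOn ℝ (s ×ˢ Icc c d) h)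
    (hint : ∀ x ∈ s, IntervalIntegrable (fun y => h (x, y)) volume c d) :
    ConvexOn ℝ s fun x => ∫ y in c..d, h (x, y) := by
  have hs : Convex ℝ s := by
    simpa [fst_image_prod _ (nonempty_Icc.mpr hcd)] using
      hh.1.linear_image (LinearMap.fst ℝ E ℝ)
  refine ⟨hs, fun x₁ hx₁ x₂ hx₂ t u ht hu htu => ?_⟩
  have hint₁ := (hint x₁ hx₁).const_mul t
  have hint₂ := (hint x₂ hx₂).const_mul u
  have hpoint : ∀ y ∈ Icc c d,
      h (t • x₁ + u • x₂, y) ≤ t * h (x₁, y) + u * h (x₂, y) := by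
    intro y hy
    have hy' : t * y + u * y = y := by rw [← add_mul, htu, one_mul]
    simpa [hy'] using hh.2 (mk_mem_prod hx₁ hy) (mk_mem_prod hx₂ hy) ht hu htu
  simp only [smul_eq_mul]
  calc ∫ y in c..d, h (t • x₁ + u • x₂, y)
      ≤ ∫ y in c..d, (t * h (x₁, y) + u * h (x₂, y)) :=
        integral_mono_on hcd (hint _ (hs hx₁ hx₂ ht hu htu)) (hint₁.add hint₂) hpoint
    _ = t * (∫ y in c..d, h (x₁, y)) + u * ∫ y in c..d, h (x₂, y) := by
        rw [intervalIntegral.integral_add hint₁ hint₂, intervalIntegral.integral_const_mul,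
          intervalIntegral.integral_const_mul]

theorem ContinuousOn.parametric_intervalIntegral {X E : Type*}
    [TopologicalSpace X] [NormedAddCommGroup E] [NormedSpace ℝ E] {s : Set X} {h : X × ℝ → E}
    {c d : ℝ} (hcd : c ≤ d) (hh : ContinuousOn h (s ×ˢ Icc c d)) :
    ContinuousOn (fun x => ∫ y in c..d, h (x, y)) s := by
  have hproj : ∀ x, ∫ y in c..d, h (x, projIcc c d hcd y) = ∫ y in c..d, h (x, y) := fun x =>
    integral_congr fun y hy => by
      rw [uIcc_of_le hcd] at hy
      rw [projIcc_of_mem hcd hy]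
  rw [continuousOn_iff_continuous_domRestrict]
  simp only [domRestrict_def, ← hproj]
  refine continuous_parametric_intervalIntegral_of_continuous'
    (f := fun (x : s) y => h (x, projIcc c d hcd y)) ?_ c d
  exact hh.comp_continuous (by fun_prop) fun p => mk_mem_prod p.1.2 (projIcc c d hcd p.2).2

theorem integral_affine_mul_sq_div_sq_sub_one_sixth (a α β : ℝ) (ha : a ≠ 0) :
    ∫ x in (-a)..a, (α + β * x) * (x ^ 2 / a ^ 2 - 1 / 6) = α * (a / 3) := by
  have hderiv (x : ℝ) : HasDerivAt
      (fun x => α * (x ^ 3 / (3 * a ^ 2) - x / 6) + β * (x ^ 4 / (4 * a ^ 2) - x ^ 2 / 12))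
      ((α + β * x) * (x ^ 2 / a ^ 2 - 1 / 6)) x := by
    refine (((((hasDerivAt_pow 3 x).div_const (3 * a ^ 2)).sub
      ((hasDerivAt_id x).div_const 6)).const_mul α).add
      ((((hasDerivAt_pow 4 x).div_const (4 * a ^ 2)).sub
        ((hasDerivAt_pow 2 x).div_const 12)).const_mul β)).congr_deriv ?_
    field_simp
    ring
  rw [integral_eq_sub_of_hasDerivAt (fun x _ => hderiv x)
    (by apply Continuous.intervalIntegrable; fun_prop)]
  field_simp
  ring

theorem one_sixth_le_sq_div_sq_iff {a : ℝ} (ha : 0 < a) (x : ℝ) :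
    1 / 6 ≤ x ^ 2 / a ^ 2 ↔ a / √6 ≤ |x| := by
  rw [le_div_iff₀ (by positivity),
    ← abs_of_pos (div_pos ha (by positivity : (0:ℝ) < √6)), ← sq_le_sq, div_pow,
    Real.sq_sqrt (by norm_num)]
  constructor <;> intro h <;> linarith

theorem div_sqrt_six_lt_self {a : ℝ} (ha : 0 < a) : a / √6 < a :=
  div_lt_self ha ((Real.lt_sqrt zero_le_one).mpr (by norm_num))

theorem le_integral_mul_sq_div_sq_sub_one_sixth {a b : ℝ} (ha : 0 < a) (hab : a ≤ b)
    {g : ℝ → ℝ} (hgc : ContinuousOn g (Icc (-a) b)) (hgv : ConvexOn ℝ (Icc (-a) b) g)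
    (hg0 : ∀ x ∈ Icc a b, 0 ≤ g x) :
    (g (-(a / √6)) + g (a / √6)) / 2 * (a / 3) ≤
      ∫ x in (-a)..b, g x * (x ^ 2 / a ^ 2 - 1 / 6) := by
  set r := a / √6
  have hr : 0 < r := by positivity
  have hra : r < a := div_sqrt_six_lt_self ha
  have hIcc_left : Icc (-a) a ⊆ Icc (-a) b := Icc_subset_Icc_right hab
  have hIcc_right : Icc a b ⊆ Icc (-a) b := Icc_subset_Icc_left (by linarith)
  have hint {u v : ℝ} (huv : u ≤ v) (hsub : Icc u v ⊆ Icc (-a) b) :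
      IntervalIntegrable (fun x => g x * (x ^ 2 / a ^ 2 - 1 / 6)) volume u v :=
    ((hgc.mono hsub).mul (by fun_prop)).intervalIntegrable_of_Icc huv
  have hsecant : ∀ x ∈ Icc (-a) a,
      ((g (-r) + g r) / 2 + (g r - g (-r)) / (2 * r) * x) * (x ^ 2 / a ^ 2 - 1 / 6) ≤
        g x * (x ^ 2 / a ^ 2 - 1 / 6) := by
    intro x hx
    have hw := one_sixth_le_sq_div_sq_iff ha x
    convert hgv.secant_mul_le_mul (w := fun x => x ^ 2 / a ^ 2 - 1 / 6) (p := -r) (q := r)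
      ⟨by linarith, by linarith⟩ ⟨by linarith, by linarith⟩ (hIcc_left hx) (by linarith)
      (fun hx' => sub_nonpos.mpr (not_le.mp (hw.not.mpr (not_le.mpr (abs_lt.mpr hx')))).le)
      (fun hx' => sub_nonneg.mpr (hw.mpr (not_lt.mp (mt abs_lt.mp hx')))) using 2
    field_simp
    ring
  rw [← integral_add_adjacent_intervals (hint (by linarith) hIcc_left) (hint hab hIcc_right)]
  calc (g (-r) + g r) / 2 * (a / 3)
      = ∫ x in (-a)..a, ((g (-r) + g r) / 2 + (g r - g (-r)) / (2 * r) * x) *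
          (x ^ 2 / a ^ 2 - 1 / 6) :=
        (integral_affine_mul_sq_div_sq_sub_one_sixth _ _ _ ha.ne').symm
    _ ≤ ∫ x in (-a)..a, g x * (x ^ 2 / a ^ 2 - 1 / 6) :=
        integral_mono_on (by linarith) (by apply Continuous.intervalIntegrable; fun_prop)
          (hint (by linarith) hIcc_left) hsecant
    _ ≤ _ := le_add_of_nonneg_right <| integral_nonneg hab fun x hx =>
        mul_nonneg (hg0 x hx) <| sub_nonneg.mpr <| (one_sixth_le_sq_div_sq_iff ha x).mpr
          (by rw [abs_of_pos (by linarith [hx.1])]; linarith [hx.1])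

theorem integral_mul_sq_div_sq_sub_one_sixth_nonneg {a b : ℝ} (ha : 0 < a) (hab : a ≤ b)
    {g : ℝ → ℝ} (hgc : ContinuousOn g (Icc (-a) b)) (hgv : ConvexOn ℝ (Icc (-a) b) g)
    (hg0 : ∀ x ∈ Icc (-a) b, 0 ≤ g x) :
    0 ≤ ∫ x in (-a)..b, g x * (x ^ 2 / a ^ 2 - 1 / 6) := by
  have hr : 0 < a / √6 := by positivity
  have hra : a / √6 < a := div_sqrt_six_lt_self ha
  refine le_trans ?_ (le_integral_mul_sq_div_sq_sub_one_sixth ha hab hgc hgv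
    fun x hx => hg0 x ⟨by linarith [hx.1], hx.2⟩)
  have := hg0 (a / √6) ⟨by linarith, by linarith⟩
  have := hg0 (-(a / √6)) ⟨by linarith, by linarith⟩
  positivity

/-- Example 2 (second part): for `0 < a < b` and `c < d`, the measure
`(x²/a² − 1/6) dx dy` is a Steffensen–Popoviciu measure on the rectangle
`[−a, b] × [c, d]`: its total mass is positive and it integrates every
continuous convex `h : [−a, b] × [c, d] → [0, ∞)` to a nonnegative number. -/
theorem quadratic_weight_SP_measure_rectangle
    (a b c d : ℝ) (ha : 0 < a) (hab : a < b) (hcd : c < d) :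
    (0 < ∫ x in (-a)..b, ∫ _y in c..d, (x ^ 2 / a ^ 2 - 1 / 6)) ∧
      ∀ h : ℝ × ℝ → ℝ,
        ContinuousOn h (Set.Icc (-a) b ×ˢ Set.Icc c d) →
        ConvexOn ℝ (Set.Icc (-a) b ×ˢ Set.Icc c d) h →
        (∀ z ∈ Set.Icc (-a) b ×ˢ Set.Icc c d, 0 ≤ h z) →
        0 ≤ ∫ x in (-a)..b, ∫ y in c..d, h (x, y) * (x ^ 2 / a ^ 2 - 1 / 6) := by
  constructor
  · have hmass := le_integral_mul_sq_div_sq_sub_one_sixth ha hab.le (g := fun _ => d - c)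
      continuousOn_const (convexOn_const _ (convex_Icc _ _)) fun _ _ => (sub_pos.mpr hcd).le
    have hpos : 0 < (d - c + (d - c)) / 2 * (a / 3) := mul_pos (by linarith) (by positivity)
    simp only [intervalIntegral.integral_const, smul_eq_mul]
    linarith
  · intro h hcont hconv hnn
    have hint : ∀ x ∈ Icc (-a) b, IntervalIntegrable (fun y => h (x, y)) volume c d :=
      fun x hx =>
        (hcont.comp (by fun_prop) fun y hy => mk_mem_prod hx hy).intervalIntegrable_of_Icc hcd.le
    simp only [intervalIntegral.integral_mul_const]
    exact integral_mul_sq_div_sq_sub_one_sixth_nonneg ha hab.le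
      (hcont.parametric_intervalIntegral hcd.le) (hconv.parametric_intervalIntegral hcd.le hint)
      fun x hx => integral_nonneg hcd.le fun y hy => hnn _ (mk_mem_prod hx hy)
end

section
/- Let 0 < a < b and 0 < c < d. Then the measure (x²/a² + y²/c² − 1/3) dx dy is a Steffensen-Popoviciu measure on the rectangle [−a, b] × [−c, d]; that is, its total mass is positive and ∫_{−a}^{b} ∫_{−c}^{d} h(x,y) (x²/a² + y²/c² − 1/3) dy dx ≥ 0 for every continuous convex function h : [−a,b] × [−c,d] → [0,∞). -/
/-!
Write the weight as `w_a(x) + w_c(y)` with `w_a(x) = x²/a² - 1/6`. In one variable, `w_a` is a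
Steffensen–Popoviciu weight on `[-a, b]`: on `[a, b]` it is nonnegative, and on `[-a, a]`
folding turns `∫ g w_a` into `∫₀ᵃ (g(x) + g(-x)) w_a(x) dx`, where `g(x) + g(-x)` is
nondecreasing (an even convex function) and `w_a` changes sign once, at `a/√6`, with
`∫₀ᵃ w_a = a/6 ≥ 0`.
For the rectangle, the `w_a(x)` part is the one-variable inequality applied to the convex function
`x ↦ ∫ h(x, y) dy`, and the `w_c(y)` part is the one-variable inequality on every horizontal
slice. Continuity of `h` on the rectangle is upgraded to global continuity by Tietze extension.
-/

open MeasureTheory intervalIntegral Set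

theorem ContinuousOn.exists_continuous_eqOn {X : Type*} [TopologicalSpace X] [NormalSpace X]
    {s : Set X} (hs : IsClosed s) {f : X → ℝ} (hf : ContinuousOn f s) :
    ∃ g : X → ℝ, Continuous g ∧ EqOn g f s := by
  obtain ⟨g, hg⟩ := ContinuousMap.exists_restrict_eq hs ⟨s.domRestrict f, hf.domRestrict⟩
  exact ⟨g, g.continuous, fun x hx => congr($hg ⟨x, hx⟩)⟩

theorem ConvexOn.comp_prodMk {E F : Type*} [AddCommGroup E] [Module ℝ E] [AddCommGroup F]
    [Module ℝ F] {s : Set E} {t : Set F} {h : E × F → ℝ} (hh : ConvexOn ℝ (s ×ˢ t) h) {x : E}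
    (hx : x ∈ s) : ConvexOn ℝ t fun y => h (x, y) := by
  have hpre : (AffineMap.const ℝ F x).prod (AffineMap.id ℝ F) ⁻¹' (s ×ˢ t) = t := by
    ext y; simp [hx]
  simpa [hpre, Function.comp_def] using
    hh.comp_affineMap ((AffineMap.const ℝ F x).prod (AffineMap.id ℝ F))

theorem ConvexOn.intervalIntegral_snd {E : Type*} [AddCommGroup E] [Module ℝ E] {s : Set E}
    {c d : ℝ} (hcd : c ≤ d) {h : E × ℝ → ℝ} (hh : ConvexOn ℝ (s ×ˢ Icc c d) h)
    (hint : ∀ x ∈ s, IntervalIntegrable (fun y => h (x, y)) volume c d) :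
    ConvexOn ℝ s fun x => ∫ y in c..d, h (x, y) := by
  have hs : Convex ℝ s := by
    simpa [fst_image_prod s (nonempty_Icc.2 hcd)] using hh.1.linear_image (LinearMap.fst ℝ E ℝ)
  refine ⟨hs, fun x hx u hu t τ ht hτ htτ => ?_⟩
  have hpoint : ∀ y ∈ Icc c d, h (t • x + τ • u, y) ≤ t * h (x, y) + τ * h (u, y) := by
    intro y hy
    have := hh.2 (mk_mem_prod hx hy) (mk_mem_prod hu hy) ht hτ htτ
    rwa [Prod.smul_mk, Prod.smul_mk, Prod.mk_add_mk, Convex.combo_self htτ] at this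
  simp only [smul_eq_mul]
  calc ∫ y in c..d, h (t • x + τ • u, y)
      ≤ ∫ y in c..d, (t * h (x, y) + τ * h (u, y)) :=
        integral_mono_on hcd (hint _ (hs hx hu ht hτ htτ))
          (((hint x hx).const_mul t).add ((hint u hu).const_mul τ)) hpoint
    _ = (t * ∫ y in c..d, h (x, y)) + τ * ∫ y in c..d, h (u, y) := by
        rw [intervalIntegral.integral_add ((hint x hx).const_mul t) ((hint u hu).const_mul τ),
          intervalIntegral.integral_const_mul, intervalIntegral.integral_const_mul]

theorem ConvexOn.monotoneOn_add_comp_neg {a : ℝ} {g : ℝ → ℝ}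
    (hg : ConvexOn ℝ (Icc (-a) a) g) : MonotoneOn (fun x => g x + g (-x)) (Icc 0 a) := by
  have hneg : ConvexOn ℝ (Icc (-a) a) (fun x => g (-x)) := by
    have hpre : (-LinearMap.id : ℝ →ₗ[ℝ] ℝ) ⁻¹' Icc (-a) a = Icc (-a) a := by
      ext x; simp [neg_le, and_comm]
    have := hg.comp_linearMap (-LinearMap.id)
    rwa [hpre] at this
  intro s hs t ht hst
  have hmem : ∀ u ∈ Icc 0 a, u ∈ Icc (-a) a ∧ -u ∈ Icc (-a) a := fun u ⟨hu0, hua⟩ =>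
    ⟨⟨by linarith, hua⟩, ⟨by linarith, by linarith⟩⟩
  have := (hg.add hneg).le_max_of_mem_Icc (hmem t ht).2 (hmem t ht).1
    (⟨by linarith [hs.1], hst⟩ : s ∈ Icc (-t) t)
  simpa [add_comm] using this

theorem integral_neg_self_eq_integral_add_comp_neg {f : ℝ → ℝ} {a : ℝ}
    (hf : IntervalIntegrable f volume (-a) a) :
    ∫ x in -a..a, f x = ∫ x in 0..a, (f x + f (-x)) := by
  have h0 : (0 : ℝ) ∈ uIcc (-a) a := by
    rcases le_total 0 a with ha | ha
    · exact mem_uIcc.2 (Or.inl ⟨by linarith, ha⟩)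
    · exact mem_uIcc.2 (Or.inr ⟨ha, by linarith⟩)
  have hleft : IntervalIntegrable f volume (-a) 0 := hf.mono_set (uIcc_subset_uIcc_left h0)
  have hright : IntervalIntegrable f volume 0 a := hf.mono_set (uIcc_subset_uIcc_right h0)
  have hreflect : IntervalIntegrable (fun x => f (-x)) volume 0 a := by
    simpa using ((IntervalIntegrable.iff_comp_neg (f := f)).1 hleft).symm
  rw [← integral_add_adjacent_intervals hleft hright,
    intervalIntegral.integral_add hright hreflect, integral_comp_neg, neg_zero, add_comm]

theorem integral_mul_nonneg_of_monotoneOn {G w : ℝ → ℝ} {p q x₀ : ℝ} (hx₀ : x₀ ∈ Icc p q)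
    (hG : MonotoneOn G (Icc p q)) (hGx₀ : 0 ≤ G x₀) (hw : IntervalIntegrable w volume p q)
    (hw_neg : ∀ x ∈ Icc p x₀, w x ≤ 0) (hw_pos : ∀ x ∈ Icc x₀ q, 0 ≤ w x)
    (hw_int : 0 ≤ ∫ x in p..q, w x) :
    0 ≤ ∫ x in p..q, G x * w x := by
  by_cases hGw : IntervalIntegrable (fun x => G x * w x) volume p q
  swap
  · rw [integral_undef hGw] -- the integral of a non-integrable function is `0`
  have hshift : 0 ≤ ∫ x in p..q, (G x - G x₀) * w x := by
    refine integral_nonneg (hx₀.1.trans hx₀.2) fun x hx => ?_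
    rcases le_total x x₀ with hle | hle
    · exact mul_nonneg_of_nonpos_of_nonpos (sub_nonpos.2 (hG hx hx₀ hle))
        (hw_neg x ⟨hx.1, hle⟩)
    · exact mul_nonneg (sub_nonneg.2 (hG hx₀ hx hle)) (hw_pos x ⟨hle, hx.2⟩)
  have hsplit : ∫ x in p..q, G x * w x
      = (∫ x in p..q, (G x - G x₀) * w x) + G x₀ * ∫ x in p..q, w x := by
    have hint : IntervalIntegrable (fun x => (G x - G x₀) * w x) volume p q := by
      simpa only [sub_mul] using hGw.sub (hw.const_mul (G x₀))
    rw [← intervalIntegral.integral_const_mul,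
      ← intervalIntegral.integral_add hint (hw.const_mul _)]
    simp only [sub_mul, sub_add_cancel]
  rw [hsplit]
  exact add_nonneg hshift (mul_nonneg hGx₀ hw_int)

theorem integral_integral_add {u v : ℝ → ℝ} {p q r s : ℝ}
    (hu : IntervalIntegrable u volume p q) (hv : IntervalIntegrable v volume r s) :
    ∫ x in p..q, ∫ y in r..s, (u x + v y)
      = (s - r) * (∫ x in p..q, u x) + (q - p) * ∫ y in r..s, v y := by
  simp only [intervalIntegral.integral_add intervalIntegrable_const hv,
    intervalIntegral.integral_const, smul_eq_mul]
  rw [intervalIntegral.integral_add (hu.const_mul _) intervalIntegrable_const,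
    intervalIntegral.integral_const_mul, intervalIntegral.integral_const, smul_eq_mul]

theorem integral_integral_mul_add {h : ℝ × ℝ → ℝ} (hh : Continuous h) {u v : ℝ → ℝ}
    (hu : Continuous u) (hv : Continuous v) (p q r s : ℝ) :
    ∫ x in p..q, ∫ y in r..s, h (x, y) * (u x + v y)
      = (∫ x in p..q, (∫ y in r..s, h (x, y)) * u x)
        + ∫ x in p..q, ∫ y in r..s, h (x, y) * v y := by
  have hslice : ∀ x, Continuous fun y => h (x, y) := fun x => hh.comp (.prodMk_right x)
  have hH : Continuous fun x => ∫ y in r..s, h (x, y) :=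
    continuous_parametric_intervalIntegral_of_continuous' (f := fun x y => h (x, y)) hh r s
  have hK : Continuous fun x => ∫ y in r..s, h (x, y) * v y :=
    continuous_parametric_intervalIntegral_of_continuous' (f := fun x y => h (x, y) * v y)
      (hh.mul (hv.comp continuous_snd)) r s
  have hHu : IntervalIntegrable (fun x => (∫ y in r..s, h (x, y)) * u x) volume p q :=
    (hH.mul hu).intervalIntegrable _ _
  rw [← intervalIntegral.integral_add hHu (hK.intervalIntegrable _ _)]
  refine integral_congr fun x _ => ?_
  simp only [mul_add]
  rw [intervalIntegral.integral_add (f := fun y => h (x, y) * u x) (g := fun y => h (x, y) * v y)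
    (((hslice x).mul continuous_const).intervalIntegrable _ _)
    (((hslice x).mul hv).intervalIntegrable _ _), intervalIntegral.integral_mul_const]

noncomputable def quadWeight (a x : ℝ) : ℝ := x ^ 2 / a ^ 2 - 1 / 6

theorem continuous_quadWeight (a : ℝ) : Continuous (quadWeight a) := by
  unfold quadWeight; fun_prop

theorem quadWeight_neg (a x : ℝ) : quadWeight a (-x) = quadWeight a x := by
  simp [quadWeight]

theorem quadWeight_eq {a : ℝ} (ha : a ≠ 0) (x : ℝ) :
    quadWeight a x = (x ^ 2 - (a / √6) ^ 2) / a ^ 2 := by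
  rw [quadWeight, div_pow, Real.sq_sqrt (by norm_num)]
  field_simp

theorem quadWeight_nonpos {a x : ℝ} (ha : a ≠ 0) (hx : x ∈ Icc 0 (a / √6)) :
    quadWeight a x ≤ 0 := by
  rw [quadWeight_eq ha]
  exact div_nonpos_of_nonpos_of_nonneg (sub_nonpos.2 (pow_le_pow_left₀ hx.1 hx.2 2))
    (sq_nonneg a)

theorem quadWeight_nonneg {a x : ℝ} (ha : 0 < a) (hx : a / √6 ≤ x) : 0 ≤ quadWeight a x := by
  rw [quadWeight_eq ha.ne']
  exact div_nonneg (sub_nonneg.2 (pow_le_pow_left₀ (by positivity) hx 2)) (sq_nonneg a)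

theorem div_sqrt_six_le_self {a : ℝ} (ha : 0 ≤ a) : a / √6 ≤ a :=
  div_le_self ha (Real.one_le_sqrt.2 (by norm_num))

theorem integral_quadWeight {a : ℝ} (ha : a ≠ 0) (p q : ℝ) :
    ∫ x in p..q, quadWeight a x = (q ^ 3 - p ^ 3) / (3 * a ^ 2) - (q - p) / 6 := by
  simp only [quadWeight]
  rw [intervalIntegral.integral_sub (((continuous_pow 2).intervalIntegrable _ _).div_const _)
    intervalIntegrable_const, intervalIntegral.integral_div, integral_pow,
    intervalIntegral.integral_const, smul_eq_mul]
  field_simp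
  ring

theorem integral_quadWeight_pos {a b : ℝ} (ha : 0 < a) (hab : a ≤ b) :
    0 < ∫ x in -a..b, quadWeight a x := by
  rw [integral_quadWeight ha.ne']
  have key : (b ^ 3 - (-a) ^ 3) / (3 * a ^ 2) - (b - -a) / 6
      = (a + b) * ((b - a) ^ 2 + b ^ 2) / (6 * a ^ 2) := by
    field_simp; ring
  rw [key]
  have : 0 < b := ha.trans_le hab
  positivity

theorem integral_neg_self_mul_quadWeight_nonneg {a : ℝ} (ha : 0 < a) {g : ℝ → ℝ}
    (hg : ConvexOn ℝ (Icc (-a) a) g) (hg₀ : ∀ x ∈ Icc (-a) a, 0 ≤ g x) :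
    0 ≤ ∫ x in -a..a, g x * quadWeight a x := by
  by_cases hgw : IntervalIntegrable (fun x => g x * quadWeight a x) volume (-a) a
  swap
  · rw [integral_undef hgw]
  rw [integral_neg_self_eq_integral_add_comp_neg hgw]
  simp only [quadWeight_neg, ← add_mul]
  have hx₀ : a / √6 ∈ Icc 0 a := ⟨by positivity, div_sqrt_six_le_self ha.le⟩
  refine integral_mul_nonneg_of_monotoneOn hx₀ hg.monotoneOn_add_comp_neg ?_
    ((continuous_quadWeight a).intervalIntegrable _ _) (fun x hx => ?_) (fun x hx => ?_) ?_
  · exact add_nonneg (hg₀ _ ⟨by linarith [hx₀.1], hx₀.2⟩)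
      (hg₀ _ ⟨by linarith [hx₀.2], by linarith [hx₀.1]⟩)
  · exact quadWeight_nonpos ha.ne' hx
  · exact quadWeight_nonneg ha hx.1
  · rw [integral_quadWeight ha.ne', show (a ^ 3 - 0 ^ 3) / (3 * a ^ 2) - (a - 0) / 6 = a / 6 by
      field_simp; ring]
    positivity

theorem integral_mul_quadWeight_nonneg {a b : ℝ} (ha : 0 < a) (hab : a ≤ b) {g : ℝ → ℝ}
    (hg : ConvexOn ℝ (Icc (-a) b) g) (hg₀ : ∀ x ∈ Icc (-a) b, 0 ≤ g x) :
    0 ≤ ∫ x in -a..b, g x * quadWeight a x := by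
  by_cases hgw : IntervalIntegrable (fun x => g x * quadWeight a x) volume (-a) b
  swap
  · rw [integral_undef hgw]
  have hsub : Icc (-a) a ⊆ Icc (-a) b := Icc_subset_Icc_right hab
  have ha_mem : a ∈ uIcc (-a) b := by
    rw [uIcc_of_le (by linarith)]; exact ⟨by linarith, hab⟩
  rw [← integral_add_adjacent_intervals (hgw.mono_set (uIcc_subset_uIcc_left ha_mem))
    (hgw.mono_set (uIcc_subset_uIcc_right ha_mem))]
  refine add_nonneg (integral_neg_self_mul_quadWeight_nonneg ha (hg.subset hsub (convex_Icc _ _))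
    fun x hx => hg₀ x (hsub hx)) (integral_nonneg hab fun x hx => mul_nonneg ?_ ?_)
  · exact hg₀ x ⟨by linarith [hx.1], hx.2⟩
  · exact quadWeight_nonneg ha ((div_sqrt_six_le_self ha.le).trans hx.1)

theorem integral_integral_mul_quadWeight_add_nonneg {a b c d : ℝ} (ha : 0 < a) (hab : a ≤ b)
    (hc : 0 < c) (hcd : c ≤ d) {h : ℝ × ℝ → ℝ} (hh : Continuous h)
    (hconv : ConvexOn ℝ (Icc (-a) b ×ˢ Icc (-c) d) h)
    (hpos : ∀ z ∈ Icc (-a) b ×ˢ Icc (-c) d, 0 ≤ h z) :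
    0 ≤ ∫ x in -a..b, ∫ y in -c..d, h (x, y) * (quadWeight a x + quadWeight c y) := by
  have hslice : ∀ x, IntervalIntegrable (fun y => h (x, y)) volume (-c) d := fun x =>
    (hh.comp (.prodMk_right x)).intervalIntegrable _ _
  rw [integral_integral_mul_add hh (continuous_quadWeight a) (continuous_quadWeight c)]
  refine add_nonneg (integral_mul_quadWeight_nonneg ha hab ?_ ?_) ?_
  · exact hconv.intervalIntegral_snd (by linarith) fun x _ => hslice x
  · exact fun x hx => integral_nonneg (by linarith) fun y hy => hpos _ ⟨hx, hy⟩
  · exact integral_nonneg (by linarith) fun x hx =>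
      integral_mul_quadWeight_nonneg hc hcd (hconv.comp_prodMk hx) fun y hy => hpos _ ⟨hx, hy⟩

/-- Example 2 (third part): for `0 < a < b` and `0 < c < d`, the measure
`(x²/a² + y²/c² − 1/3) dx dy` is a Steffensen–Popoviciu measure on the rectangle
`[−a, b] × [−c, d]`: its total mass is positive and it integrates every
continuous convex `h : [−a, b] × [−c, d] → [0, ∞)` to a nonnegative number. -/
theorem sum_quadratic_weight_SP_measure_rectangle
    (a b c d : ℝ) (ha : 0 < a) (hab : a < b) (hc : 0 < c) (hcd : c < d) :
    (0 < ∫ x in (-a)..b, ∫ y in (-c)..d,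
        (x ^ 2 / a ^ 2 + y ^ 2 / c ^ 2 - 1 / 3)) ∧
      ∀ h : ℝ × ℝ → ℝ,
        ContinuousOn h (Set.Icc (-a) b ×ˢ Set.Icc (-c) d) →
        ConvexOn ℝ (Set.Icc (-a) b ×ˢ Set.Icc (-c) d) h →
        (∀ z ∈ Set.Icc (-a) b ×ˢ Set.Icc (-c) d, 0 ≤ h z) →
        0 ≤ ∫ x in (-a)..b, ∫ y in (-c)..d,
            h (x, y) * (x ^ 2 / a ^ 2 + y ^ 2 / c ^ 2 - 1 / 3) := by
  have hweight : ∀ x y : ℝ,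
      x ^ 2 / a ^ 2 + y ^ 2 / c ^ 2 - 1 / 3 = quadWeight a x + quadWeight c y := fun x y => by
    unfold quadWeight; ring
  simp only [hweight]
  refine ⟨?_, fun h hcont hconv hpos => ?_⟩
  · rw [integral_integral_add ((continuous_quadWeight a).intervalIntegrable _ _)
      ((continuous_quadWeight c).intervalIntegrable _ _)]
    exact add_pos (mul_pos (by linarith) (integral_quadWeight_pos ha hab.le))
      (mul_pos (by linarith) (integral_quadWeight_pos hc hcd.le))
  · obtain ⟨g, hg, hgh⟩ := hcont.exists_continuous_eqOn (isClosed_Icc.prod isClosed_Icc)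
    refine (integral_integral_mul_quadWeight_add_nonneg ha hab.le hc hcd.le hg
      (hconv.congr hgh.symm) fun z hz => hgh hz ▸ hpos z hz).trans_eq
      (integral_congr fun x hx => integral_congr fun y hy => ?_)
    rw [uIcc_of_le (by linarith)] at hx hy
    rw [hgh (mk_mem_prod hx hy)]
end

section
/- Let K be a compact convex subset of ℝ^N and let μ be a Steffensen-Popoviciu measure on K, i.e., a real (signed) Borel measure with μ(K) > 0 such that ∫_K g dμ ≥ 0 for every continuous convex function g : K → [0,∞). Then the barycenter b_μ = (1/μ(K)) ∫_K x dμ(x) belongs to K, and for every continuous convex function f : K → ℝ one has f(b_μ) ≤ (1/μ(K)) ∫_K f(x) dμ(x). -/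
/-!
Testing the Steffensen–Popoviciu condition on `f - (ℓ + c)`, for a continuous affine minorant
`ℓ + c` of a continuous convex `f` on `K`, gives `ℓ b + c ≤ μ(K)⁻¹ ∫_K f dμ` at the barycenter `b`.
If `b ∉ K`, Hahn–Banach separates `b` from `K` by such an affine function (minorizing `f = 0`),
a contradiction. Jensen's inequality follows because a lower semicontinuous convex function on a
closed convex set is the supremum of its continuous affine minorants.
-/

open MeasureTheory

section SteffensenPopoviciu

variable {E : Type*} [NormedAddCommGroup E] [NormedSpace ℝ E] [CompleteSpace E]
  [MeasurableSpace E] [BorelSpace E] {K : Set E}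

def IsSteffensenPopoviciu (K : Set E) (μ₁ μ₂ : Measure E) : Prop :=
  ∀ g : E → ℝ, ContinuousOn g K → ConvexOn ℝ K g → (∀ x ∈ K, 0 ≤ g x) →
    0 ≤ (∫ x in K, g x ∂μ₁) - ∫ x in K, g x ∂μ₂

theorem setIntegral_continuousLinearMap_add_const (hK : IsCompact K) (μ : Measure E)
    [IsFiniteMeasure μ] (ℓ : E →L[ℝ] ℝ) (c : ℝ) :
    ∫ x in K, (ℓ x + c) ∂μ = ℓ (∫ x in K, x ∂μ) + μ.real K * c := by
  have hid : IntegrableOn (fun x => x) K μ := continuousOn_id.integrableOn_compact hK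
  rw [integral_add (ℓ.integrable_comp hid) (integrable_const c), ℓ.integral_comp_comm hid,
    setIntegral_const, smul_eq_mul]

theorem IsSteffensenPopoviciu.affine_le {μ₁ μ₂ : Measure E} [IsFiniteMeasure μ₁]
    [IsFiniteMeasure μ₂] (hSP : IsSteffensenPopoviciu K μ₁ μ₂) (hK : IsCompact K)
    (hKc : Convex ℝ K) {f : E → ℝ} (hfc : ContinuousOn f K) (hf : ConvexOn ℝ K f)
    (ℓ : E →L[ℝ] ℝ) (c : ℝ) (hle : ∀ x ∈ K, ℓ x + c ≤ f x) :
    ℓ ((∫ x in K, x ∂μ₁) - ∫ x in K, x ∂μ₂) + (μ₁.real K - μ₂.real K) * c ≤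
      (∫ x in K, f x ∂μ₁) - ∫ x in K, f x ∂μ₂ := by
  have hsub (μ : Measure E) [IsFiniteMeasure μ] : ∫ x in K, (f x - (ℓ x + c)) ∂μ =
      ∫ x in K, f x ∂μ - (ℓ (∫ x in K, x ∂μ) + μ.real K * c) := by
    rw [integral_sub (g := fun x => ℓ x + c) (hfc.integrableOn_compact hK)
      ((ℓ.continuous.add continuous_const).continuousOn.integrableOn_compact hK),
      setIntegral_continuousLinearMap_add_const hK]
  have h := hSP (fun x => f x - (ℓ x + c)) (by fun_prop)
    (hf.sub ((ℓ.toLinearMap.concaveOn hKc).add_const c)) fun x hx => sub_nonneg.2 (hle x hx)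
  rw [hsub, hsub] at h
  rw [map_sub]
  linarith

theorem IsSteffensenPopoviciu.affine_barycenter_le {μ₁ μ₂ : Measure E} [IsFiniteMeasure μ₁]
    [IsFiniteMeasure μ₂] (hSP : IsSteffensenPopoviciu K μ₁ μ₂) (hK : IsCompact K)
    (hKc : Convex ℝ K) (hmass : 0 < μ₁.real K - μ₂.real K) {f : E → ℝ}
    (hfc : ContinuousOn f K) (hf : ConvexOn ℝ K f)
    (ℓ : E →L[ℝ] ℝ) (c : ℝ) (hle : ∀ x ∈ K, ℓ x + c ≤ f x) :
    ℓ ((μ₁.real K - μ₂.real K)⁻¹ • ((∫ x in K, x ∂μ₁) - ∫ x in K, x ∂μ₂)) + c ≤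
      (μ₁.real K - μ₂.real K)⁻¹ * ((∫ x in K, f x ∂μ₁) - ∫ x in K, f x ∂μ₂) := by
  have h := mul_le_mul_of_nonneg_left (hSP.affine_le hK hKc hfc hf ℓ c hle)
    (inv_nonneg.2 hmass.le)
  rwa [mul_add, ← mul_assoc, inv_mul_cancel₀ hmass.ne', one_mul, ← smul_eq_mul, ← map_smul] at h

end SteffensenPopoviciu

theorem jensen_steffensen_popoviciu_general
    (N : ℕ) (K : Set (EuclideanSpace ℝ (Fin N)))
    (hK_compact : IsCompact K) (hK_convex : Convex ℝ K)
    (μ₁ μ₂ : Measure (EuclideanSpace ℝ (Fin N)))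
    [IsFiniteMeasure μ₁] [IsFiniteMeasure μ₂]
    (hmass : 0 < (μ₁ K).toReal - (μ₂ K).toReal)
    (hSP : ∀ g : EuclideanSpace ℝ (Fin N) → ℝ, ContinuousOn g K →
      ConvexOn ℝ K g → (∀ x ∈ K, 0 ≤ g x) →
      0 ≤ (∫ x in K, g x ∂μ₁) - ∫ x in K, g x ∂μ₂) :
    (((μ₁ K).toReal - (μ₂ K).toReal)⁻¹ •
        ((∫ x in K, x ∂μ₁) - ∫ x in K, x ∂μ₂)) ∈ K ∧
      ∀ f : EuclideanSpace ℝ (Fin N) → ℝ, ContinuousOn f K → ConvexOn ℝ K f →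
        f (((μ₁ K).toReal - (μ₂ K).toReal)⁻¹ •
            ((∫ x in K, x ∂μ₁) - ∫ x in K, x ∂μ₂)) ≤
          ((μ₁ K).toReal - (μ₂ K).toReal)⁻¹ *
            ((∫ x in K, f x ∂μ₁) - ∫ x in K, f x ∂μ₂) := by
  have hSP : IsSteffensenPopoviciu K μ₁ μ₂ := hSP
  simp only [← measureReal_def] at hmass ⊢
  have hmem : (μ₁.real K - μ₂.real K)⁻¹ • ((∫ x in K, x ∂μ₁) - ∫ x in K, x ∂μ₂) ∈ K := by
    by_contra hb
    obtain ⟨ℓ, u, hlt, hgt⟩ :=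
      geometric_hahn_banach_closed_point hK_convex hK_compact.isClosed hb
    have h := hSP.affine_barycenter_le hK_compact hK_convex hmass continuousOn_const
      (convexOn_const 0 hK_convex) ℓ (-u) fun x hx => by linarith [hlt x hx]
    simp only [integral_zero, sub_zero, mul_zero] at h
    linarith
  refine ⟨hmem, fun f hfc hf => ?_⟩
  by_contra! hfb
  obtain ⟨a, hΦa, haf⟩ := exists_between hfb
  obtain ⟨ℓ, c, hle, heq⟩ := hf.exists_affine_le_of_lt (𝕜 := ℝ) hmem haf hK_compact.isClosed
    hfc.lowerSemicontinuousOn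
  have h := hSP.affine_barycenter_le hK_compact hK_convex hmass hfc hf ℓ c
    fun x hx => by simpa using hle ⟨x, hx⟩
  simp only [RCLike.re_to_real] at heq
  linarith

/-- Theorem 2: if `μ = μ₁ − μ₂` is a Steffensen–Popoviciu measure on a compact
convex set `K ⊆ ℝ^N`, then its barycenter `b_μ = (1/μ(K)) ∫_K x dμ` belongs to
`K` and Jensen's inequality `f(b_μ) ≤ (1/μ(K)) ∫_K f dμ` holds for every
continuous convex function `f : K → ℝ`. The signed measure is represented as the
difference of two finite Borel measures carried by `K`. -/
theorem jensen_steffensen_popoviciu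
    (N : ℕ) (K : Set (EuclideanSpace ℝ (Fin N)))
    (hK_compact : IsCompact K) (hK_convex : Convex ℝ K)
    (μ₁ μ₂ : Measure (EuclideanSpace ℝ (Fin N)))
    [IsFiniteMeasure μ₁] [IsFiniteMeasure μ₂]
    (hμ₁ : μ₁ Kᶜ = 0) (hμ₂ : μ₂ Kᶜ = 0)
    (hmass : 0 < (μ₁ K).toReal - (μ₂ K).toReal)
    (hSP : ∀ g : EuclideanSpace ℝ (Fin N) → ℝ, ContinuousOn g K →
      ConvexOn ℝ K g → (∀ x ∈ K, 0 ≤ g x) →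
      0 ≤ (∫ x in K, g x ∂μ₁) - ∫ x in K, g x ∂μ₂) :
    (((μ₁ K).toReal - (μ₂ K).toReal)⁻¹ •
        ((∫ x in K, x ∂μ₁) - ∫ x in K, x ∂μ₂)) ∈ K ∧
      ∀ f : EuclideanSpace ℝ (Fin N) → ℝ, ContinuousOn f K → ConvexOn ℝ K f →
        f (((μ₁ K).toReal - (μ₂ K).toReal)⁻¹ •
            ((∫ x in K, x ∂μ₁) - ∫ x in K, x ∂μ₂)) ≤
          ((μ₁ K).toReal - (μ₂ K).toReal)⁻¹ *
            ((∫ x in K, f x ∂μ₁) - ∫ x in K, f x ∂μ₂) :=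
  jensen_steffensen_popoviciu_general N K hK_compact hK_convex μ₁ μ₂ hmass hSP
end

section
/- Let Ω be the set of triplets (x, y, z) with x ≤ y ≤ z in [−π/3, π/3) such that 2x − y + 3z ≥ 0 and (π/(3√3)) (2 tan x − tan y + 3 tan z) ≥ 2x − y + 3z. Then for every (x, y, z) ∈ Ω one has tan((2x − y + 3z)/4) ≤ (2 tan x − tan y + 3 tan z)/4. -/
/-!
`tan` is convex on `[0, π/2)` and vanishes at `0`, so on `[0, π/3]` it lies below its chord through
`(0, 0)` and `(π/3, √3)`: `tan t ≤ (3√3/π) t`. With `s = 2x − y + 3z`, the ordering `x ≤ y ≤ z`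
gives `2x − y ≤ z`, hence `s/4 ∈ [0, π/3]`, and the constraint says precisely that the chord value
`(3√3/π)(s/4)` is at most `(2 tan x − tan y + 3 tan z)/4`.
-/

open Real Set

theorem Real.convexOn_tan : ConvexOn ℝ (Ico 0 (π / 2)) tan := by
  have hcos : ∀ t ∈ Ico 0 (π / 2), cos t ≠ 0 := fun t ht =>
    (cos_pos_of_mem_Ioo ⟨by linarith [ht.1, pi_pos], ht.2⟩).ne'
  refine MonotoneOn.convexOn_of_deriv (convex_Ico _ _)
    (fun t ht => (continuousAt_tan.2 (hcos t ht)).continuousWithinAt) ?_ ?_ <;>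
    rw [interior_Ico]
  · exact fun t ht =>
      (differentiableAt_tan.2 (hcos t (Ioo_subset_Ico_self ht))).differentiableWithinAt
  intro a ha b hb hab
  have hcb : 0 < cos b := cos_pos_of_mem_Ioo ⟨by linarith [hb.1, pi_pos], hb.2⟩
  have hcos_le : cos b ≤ cos a :=
    cos_le_cos_of_nonneg_of_le_pi ha.1.le (by linarith [hb.2, pi_pos]) hab
  simp only [deriv_tan]
  gcongr

theorem ConvexOn.le_div_mul_of_map_zero {f : ℝ → ℝ} {s : Set ℝ} (hf : ConvexOn ℝ s f)
    (h0 : 0 ∈ s) (hf0 : f 0 = 0) {a t : ℝ} (ha : a ∈ s) (ht : 0 ≤ t) (hta : t ≤ a) :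
    f t ≤ f a / a * t := by
  rcases ht.eq_or_lt with rfl | ht
  · simp [hf0]
  have ha0 : 0 < a := ht.trans_le hta
  have hconv := hf.2 h0 ha (sub_nonneg.2 ((div_le_one ha0).2 hta)) (div_nonneg ht.le ha0.le)
    (sub_add_cancel 1 (t / a))
  simp only [smul_eq_mul, mul_zero, zero_add, hf0, div_mul_cancel₀ t ha0.ne'] at hconv
  linarith [div_mul_comm (f a) a t]

theorem Real.tan_le_mul_self_of_le_pi_div_three {t : ℝ} (ht : 0 ≤ t) (htπ : t ≤ π / 3) :
    tan t ≤ 3 * √3 / π * t := by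
  have h := convexOn_tan.le_div_mul_of_map_zero ⟨le_rfl, by positivity⟩ tan_zero
    ⟨by positivity, by linarith [pi_pos]⟩ ht htπ
  rwa [tan_pi_div_three, div_div_eq_mul_div, mul_comm √3] at h

theorem tan_weighted_jensen_general
    (x y z : ℝ) (hxy : x ≤ y) (hyz : y ≤ z)
    (hz : z ∈ Set.Ico (-(π / 3)) (π / 3))
    (hpos : 0 ≤ 2 * x - y + 3 * z)
    (hconstraint : 2 * x - y + 3 * z ≤
      π / (3 * Real.sqrt 3) * (2 * tan x - tan y + 3 * tan z)) :
    tan ((2 * x - y + 3 * z) / 4) ≤ (2 * tan x - tan y + 3 * tan z) / 4 := by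
  set s := 2 * x - y + 3 * z
  set T := 2 * tan x - tan y + 3 * tan z
  have hs : s / 4 ≤ π / 3 := by linarith [hz.2]
  have hT : 3 * √3 / π * s ≤ T := by
    rw [div_mul_eq_mul_div, le_div_iff₀ (by positivity)] at hconstraint
    rw [div_mul_eq_mul_div, div_le_iff₀ pi_pos]
    linarith
  calc tan (s / 4) ≤ 3 * √3 / π * (s / 4) := tan_le_mul_self_of_le_pi_div_three (by linarith) hs
    _ ≤ T / 4 := by linarith

/-- The inequality underlying the constrained optimization problem illustrating
Theorem 3: on the set `Ω` of triplets `x ≤ y ≤ z` in `[−π/3, π/3)` with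
`2x − y + 3z ≥ 0` and `(π/(3√3))(2 tan x − tan y + 3 tan z) ≥ 2x − y + 3z`,
one has `tan((2x − y + 3z)/4) ≤ (2 tan x − tan y + 3 tan z)/4`. -/
theorem tan_weighted_jensen
    (x y z : ℝ) (hxy : x ≤ y) (hyz : y ≤ z)
    (hx : x ∈ Set.Ico (-(π / 3)) (π / 3))
    (hy : y ∈ Set.Ico (-(π / 3)) (π / 3))
    (hz : z ∈ Set.Ico (-(π / 3)) (π / 3))
    (hpos : 0 ≤ 2 * x - y + 3 * z)
    (hconstraint : 2 * x - y + 3 * z ≤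
      π / (3 * Real.sqrt 3) * (2 * tan x - tan y + 3 * tan z)) :
    tan ((2 * x - y + 3 * z) / 4) ≤ (2 * tan x - tan y + 3 * tan z) / 4 :=
  tan_weighted_jensen_general x y z hxy hyz hz hpos hconstraint
end
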